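/- arXiv:2302.08781 — 11 statements merged into one kernel-verified Lean document; each statement's English description precedes it below -/
import Mathlib

section
/- Let X be a real n×N₁ matrix, Y a real m×N₁ matrix, U a real m×N₂ matrix, V a real n×N₂ matrix, and L ≥ 0. There exists a real m×n matrix M with σ_max(M) ≤ L (equivalently, MᵀM ⪯ L²·I) such that Y = M·X and V = Mᵀ·U if and only if the following three conditions hold: Xᵀ·V = Yᵀ·U, Yᵀ·Y ⪯ L²·Xᵀ·X, and Vᵀ·V ⪯ L²·Uᵀ·U. -/
/-!
Necessity is immediate. For sufficiency, rescale to `L = 1` and view the matrices as linear maps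
between Euclidean spaces. Douglas factorization turns the Gram inequalities into contractions `a`
on the column space `K₁` of `X` with `a X = Y` and `b` on the column space `K₂` of `U` with
`b U = V`, and `XᵀV = YᵀU` says that both prescribe the same corner `A : K₁ → K₂`. A contraction
extending `a` whose adjoint extends `b` exists by Parrott's theorem: the defect operators
`T = (1 - A*A)^½` and `S = (1 - AA*)^½` satisfy `S A = A T`, so the Julia operator
`(p, r) ↦ (A p + S r, T p - A* r)` is an isometry; Douglas factorization writes the remaining
prescribed blocks as `Γ₁ T` and `S Γ₂` with contractions `Γ₁, Γ₂`, and filling the free corner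
with `-Γ₁ A* Γ₂` makes the completion `z ↦ (1 ⊕ Γ₁) J (P_{K₁} z, Γ₂ z)`.
-/

open LinearMap

open scoped InnerProductSpace

section Operators

variable {E F G : Type*} [NormedAddCommGroup E] [InnerProductSpace ℝ E]
  [NormedAddCommGroup F] [InnerProductSpace ℝ F] [NormedAddCommGroup G] [InnerProductSpace ℝ G]

theorem exists_contraction_comp_eq [FiniteDimensional ℝ F] (g : E →ₗ[ℝ] F) (f : E →ₗ[ℝ] G)
    (h : ∀ w, ‖f w‖ ≤ ‖g w‖) :
    ∃ H : F →ₗ[ℝ] G, (∀ z, ‖H z‖ ≤ ‖z‖) ∧ H ∘ₗ g = f ∧ range H ≤ range f := by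
  obtain ⟨s, hs⟩ := g.rangeRestrict.exists_rightInverse_of_surjective g.range_rangeRestrict
  have hgs (k : range g) : g (s k) = k := congrArg Subtype.val (LinearMap.congr_fun hs k)
  have hfg {w w' : E} (hw : g w = g w') : f w = f w' := by
    rw [← sub_eq_zero, ← map_sub, ← norm_le_zero_iff]
    simpa [hw] using h (w - w')
  refine ⟨f ∘ₗ s ∘ₗ (range g).orthogonalProjectionOnto.toLinearMap, fun z => ?_, ?_,
    range_comp_le_range _ _⟩
  · calc ‖f (s ((range g).orthogonalProjectionOnto z))‖
        ≤ ‖g (s ((range g).orthogonalProjectionOnto z))‖ := h _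
      _ ≤ ‖z‖ := by rw [hgs]; exact (range g).norm_orthogonalProjectionOnto_apply_le z
  · ext w
    apply hfg
    simpa [hgs] using Submodule.starProjection_eq_self_iff.mpr (mem_range_self g w)

theorem LinearMap.norm_adjoint_apply_le [FiniteDimensional ℝ E] [FiniteDimensional ℝ F]
    {T : E →ₗ[ℝ] F} {L : ℝ} (hL : 0 ≤ L) (hT : ∀ z, ‖T z‖ ≤ L * ‖z‖) (w : F) :
    ‖adjoint T w‖ ≤ L * ‖w‖ := by
  have hT' : ‖T.toContinuousLinearMap‖ ≤ L := ContinuousLinearMap.opNorm_le_bound _ hL hT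
  calc ‖adjoint T w‖ = ‖ContinuousLinearMap.adjoint T.toContinuousLinearMap w‖ := rfl
    _ ≤ ‖ContinuousLinearMap.adjoint T.toContinuousLinearMap‖ * ‖w‖ :=
      ContinuousLinearMap.le_opNorm _ _
    _ ≤ L * ‖w‖ := by rw [LinearIsometryEquiv.norm_map]; gcongr

theorem LinearMap.norm_adjoint_apply_le_norm [FiniteDimensional ℝ E] [FiniteDimensional ℝ F]
    {T : E →ₗ[ℝ] F} (hT : ∀ z, ‖T z‖ ≤ ‖z‖) (w : F) : ‖adjoint T w‖ ≤ ‖w‖ := by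
  simpa using norm_adjoint_apply_le zero_le_one (by simpa using hT) w

theorem LinearMap.isPositive_sq_smul_adjoint_comp_self_sub_iff [FiniteDimensional ℝ E]
    [FiniteDimensional ℝ F] [FiniteDimensional ℝ G] {L : ℝ} (hL : 0 ≤ L) (B : E →ₗ[ℝ] G)
    (A : E →ₗ[ℝ] F) :
    (L ^ 2 • (adjoint B ∘ₗ B) - adjoint A ∘ₗ A).IsPositive ↔ ∀ z, ‖A z‖ ≤ L * ‖B z‖ := by
  have hsymm : (L ^ 2 • (adjoint B ∘ₗ B) - adjoint A ∘ₗ A).IsSymmetric :=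
    ((isSymmetric_adjoint_comp_self B).smul (IsSelfAdjoint.all _)).sub
      (isSymmetric_adjoint_comp_self A)
  simp only [IsPositive, hsymm, true_and, RCLike.re_to_real, sub_apply, smul_apply,
    LinearMap.comp_apply, inner_sub_left, real_inner_smul_left, adjoint_inner_left,
    real_inner_self_eq_norm_sq, sub_nonneg, ← mul_pow]
  exact forall_congr' fun z => sq_le_sq₀ (norm_nonneg _) (by positivity)

open scoped MatrixOrder in
theorem LinearMap.IsPositive.exists_sqrt [FiniteDimensional ℝ E] {T : E →ₗ[ℝ] E}
    (hT : T.IsPositive) : ∃ S : E →ₗ[ℝ] E, S.IsPositive ∧ S ∘ₗ S = T := by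
  let b := stdOrthonormalBasis ℝ E
  set A := LinearMap.toMatrix b.toBasis b.toBasis T
  have hA : 0 ≤ A := ((LinearMap.posSemidef_toMatrix_iff b).mpr hT).nonneg
  refine ⟨Matrix.toLin b.toBasis b.toBasis (CFC.sqrt A), ?_, ?_⟩
  · rw [← LinearMap.posSemidef_toMatrix_iff b, LinearMap.toMatrix_toLin]
    exact Matrix.nonneg_iff_posSemidef.mp (CFC.sqrt_nonneg A)
  · rw [← Matrix.toLin_mul, CFC.sqrt_mul_sqrt_self A hA, Matrix.toLin_toMatrix]

theorem LinearMap.IsPositive.apply_eq_smul_of_apply_apply_eq {S : E →ₗ[ℝ] E} (hS : S.IsPositive)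
    {μ : ℝ} (hμ : 0 ≤ μ) {v : E} (hv : S (S v) = μ ^ 2 • v) : S v = μ • v := by
  rcases hμ.eq_or_lt with rfl | hμ
  · have : ‖S v‖ ^ 2 = 0 := by
      rw [← real_inner_self_eq_norm_sq, hS.isSymmetric, hv]
      simp
    simpa using this
  set w := S v - μ • v
  -- `(S + μ) w = S² v - μ² v = 0`, and `S + μ` is positive definite.
  have hw : S w + μ • w = 0 := by
    simp only [w, map_sub, map_smul, hv, smul_sub, smul_smul, sq]
    abel
  have : ⟪S w, w⟫_ℝ + μ * ‖w‖ ^ 2 = 0 := by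
    rw [← real_inner_self_eq_norm_sq, ← real_inner_smul_left, ← inner_add_left, hw,
      inner_zero_left]
  have hw0 : ‖w‖ ^ 2 = 0 := by nlinarith [hS.inner_nonneg_left w, sq_nonneg ‖w‖]
  exact sub_eq_zero.mp (by simpa using hw0)

theorem LinearMap.IsPositive.comp_eq_of_comp_comp_eq [FiniteDimensional ℝ E] {S : F →ₗ[ℝ] F}
    {T : E →ₗ[ℝ] E} (hS : S.IsPositive) (hT : T.IsPositive) {A : E →ₗ[ℝ] F}
    (h : S ∘ₗ S ∘ₗ A = A ∘ₗ T ∘ₗ T) : S ∘ₗ A = A ∘ₗ T := by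
  let b := hT.isSymmetric.eigenvectorBasis rfl
  refine b.toBasis.ext fun i => ?_
  have hTb : T (b i) = hT.isSymmetric.eigenvalues rfl i • b i :=
    hT.isSymmetric.apply_eigenvectorBasis rfl i
  have hSA : S (S (A (b i))) = hT.isSymmetric.eigenvalues rfl i ^ 2 • A (b i) := by
    simpa [hTb, smul_smul, sq] using LinearMap.congr_fun h (b i)
  simpa [hTb] using hS.apply_eq_smul_of_apply_apply_eq (hT.nonneg_eigenvalues rfl i) hSA

theorem LinearMap.IsSymmetric.norm_sq_add_norm_sq_eq [FiniteDimensional ℝ E]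
    [FiniteDimensional ℝ F] {T : E →ₗ[ℝ] E} (hT : T.IsSymmetric)
    {A : E →ₗ[ℝ] F} (h : T ∘ₗ T = 1 - adjoint A ∘ₗ A) (z : E) :
    ‖A z‖ ^ 2 + ‖T z‖ ^ 2 = ‖z‖ ^ 2 := by
  have : ‖T z‖ ^ 2 = ‖z‖ ^ 2 - ‖A z‖ ^ 2 := by
    rw [← real_inner_self_eq_norm_sq, ← hT, ← LinearMap.comp_apply, h]
    simp [inner_sub_left, adjoint_inner_left]
  linarith

theorem exists_isPositive_comp_self_eq_one_sub [FiniteDimensional ℝ E] [FiniteDimensional ℝ F]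
    {A : E →ₗ[ℝ] F} (hA : ∀ z, ‖A z‖ ≤ ‖z‖) :
    ∃ T : E →ₗ[ℝ] E, T.IsPositive ∧ T ∘ₗ T = 1 - adjoint A ∘ₗ A :=
  IsPositive.exists_sqrt <| by
    simpa [Module.End.one_eq_id] using
      (isPositive_sq_smul_adjoint_comp_self_sub_iff zero_le_one LinearMap.id A).mpr
        (by simpa using hA)

theorem exists_defect_operators [FiniteDimensional ℝ E] [FiniteDimensional ℝ F] {A : E →ₗ[ℝ] F}
    (hA : ∀ z, ‖A z‖ ≤ ‖z‖) :
    ∃ (T : E →ₗ[ℝ] E) (S : F →ₗ[ℝ] F), S.IsSymmetric ∧ S ∘ₗ A = A ∘ₗ T ∧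
      (∀ z, ‖A z‖ ^ 2 + ‖T z‖ ^ 2 = ‖z‖ ^ 2) ∧
      ∀ w, ‖adjoint A w‖ ^ 2 + ‖S w‖ ^ 2 = ‖w‖ ^ 2 := by
  obtain ⟨T, hT, hTT⟩ := exists_isPositive_comp_self_eq_one_sub hA
  obtain ⟨S, hS, hSS⟩ := exists_isPositive_comp_self_eq_one_sub (norm_adjoint_apply_le_norm hA)
  refine ⟨T, S, hS.isSymmetric, hS.comp_eq_of_comp_comp_eq hT ?_,
    hT.isSymmetric.norm_sq_add_norm_sq_eq hTT, hS.isSymmetric.norm_sq_add_norm_sq_eq hSS⟩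
  rw [← LinearMap.comp_assoc, hSS, hTT, adjoint_adjoint]
  ext z
  simp

theorem norm_add_sq_add_norm_sub_sq_eq [FiniteDimensional ℝ E] [FiniteDimensional ℝ F]
    (A : E →ₗ[ℝ] F) {T : E →ₗ[ℝ] E} {S : F →ₗ[ℝ] F}
    (hS : S.IsSymmetric) (hSA : S ∘ₗ A = A ∘ₗ T) (p : E) (r : F) :
    ‖A p + S r‖ ^ 2 + ‖T p - adjoint A r‖ ^ 2 =
      ‖A p‖ ^ 2 + ‖T p‖ ^ 2 + (‖adjoint A r‖ ^ 2 + ‖S r‖ ^ 2) := by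
  have hcross : ⟪A p, S r⟫_ℝ = ⟪T p, adjoint A r⟫_ℝ := by
    rw [← hS, ← LinearMap.comp_apply, hSA, LinearMap.comp_apply, adjoint_inner_right]
  rw [norm_add_sq_real, norm_sub_sq_real, hcross]
  ring

theorem norm_sq_julia_le [FiniteDimensional ℝ E] {K : Submodule ℝ G} [FiniteDimensional ℝ K]
    (A : E →ₗ[ℝ] K) {T : E →ₗ[ℝ] E} {S : K →ₗ[ℝ] K} {Γ : E →ₗ[ℝ] G}
    (hS : S.IsSymmetric) (hSA : S ∘ₗ A = A ∘ₗ T) (hT : ∀ p, ‖A p‖ ^ 2 + ‖T p‖ ^ 2 = ‖p‖ ^ 2)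
    (hS' : ∀ r, ‖adjoint A r‖ ^ 2 + ‖S r‖ ^ 2 = ‖r‖ ^ 2) (hΓ : ∀ p, ‖Γ p‖ ≤ ‖p‖)
    (hΓK : range Γ ≤ Kᗮ) (p : E) (r : K) :
    ‖((A p + S r : K) : G) + Γ (T p - adjoint A r)‖ ^ 2 ≤ ‖p‖ ^ 2 + ‖r‖ ^ 2 := by
  have horth : ⟪((A p + S r : K) : G), Γ (T p - adjoint A r)⟫_ℝ = 0 :=
    Submodule.inner_right_of_mem_orthogonal (A p + S r).2 (hΓK (mem_range_self _ _))
  calc _ = ‖A p + S r‖ ^ 2 + ‖Γ (T p - adjoint A r)‖ ^ 2 := by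
        rw [norm_add_sq_real, horth]
        simp
    _ ≤ ‖A p + S r‖ ^ 2 + ‖T p - adjoint A r‖ ^ 2 := by gcongr; exact hΓ _
    _ = ‖p‖ ^ 2 + ‖r‖ ^ 2 := by rw [norm_add_sq_add_norm_sub_sq_eq A hS hSA, hT, hS']

theorem norm_orthogonal_starProjection_le (K : Submodule ℝ F) [K.HasOrthogonalProjection]
    {x : F} {c d : ℝ} (hd : 0 ≤ d) (hx : ‖x‖ ≤ c)
    (h : ‖K.orthogonalProjectionOnto x‖ ^ 2 + d ^ 2 = c ^ 2) : ‖Kᗮ.starProjection x‖ ≤ d := by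
  have := K.norm_sq_eq_add_norm_sq_starProjection x
  have : ‖x‖ ^ 2 ≤ c ^ 2 := by gcongr
  rw [← sq_le_sq₀ (norm_nonneg _) hd]
  simp only [Submodule.starProjection_apply, Submodule.coe_norm] at *
  linarith

section Parrott

variable [FiniteDimensional ℝ E] [FiniteDimensional ℝ F] {K₁ : Submodule ℝ E}
  {K₂ : Submodule ℝ F}

theorem adjoint_orthogonalProjectionOnto_comp_eq {a : K₁ →ₗ[ℝ] F} {b : K₂ →ₗ[ℝ] E}
    (hab : ∀ (k : K₁) (l : K₂), ⟪a k, (l : F)⟫_ℝ = ⟪(k : E), b l⟫_ℝ) :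
    adjoint (K₂.orthogonalProjectionOnto.toLinearMap ∘ₗ a) =
      K₁.orthogonalProjectionOnto.toLinearMap ∘ₗ b := by
  ext l : 1
  refine ext_inner_left ℝ fun k => ?_
  simp only [adjoint_inner_right, LinearMap.comp_apply, ContinuousLinearMap.coe_coe]
  rw [Submodule.inner_orthogonalProjectionOnto_eq_of_mem_left, ← hab]
  exact Submodule.inner_orthogonalProjectionOnto_eq_of_mem_right l (a k)

/-- When `Γ₂` vanishes on `K₁` and `Γ₁` takes values in `K₂ᗮ`, this is the block operator
`[[A, S Γ₂], [a - A, -Γ₁ A* Γ₂]]` with respect to `E = K₁ ⊕ K₁ᗮ` and `F = K₂ ⊕ K₂ᗮ`. -/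
noncomputable def parrottCompletion (a : K₁ →ₗ[ℝ] F) (A : K₁ →ₗ[ℝ] K₂) (S : K₂ →ₗ[ℝ] K₂)
    (Γ₁ : K₁ →ₗ[ℝ] F) (Γ₂ : E →ₗ[ℝ] K₂) : E →ₗ[ℝ] F :=
  a ∘ₗ K₁.orthogonalProjectionOnto.toLinearMap + K₂.subtype ∘ₗ S ∘ₗ Γ₂ -
    Γ₁ ∘ₗ adjoint A ∘ₗ Γ₂

variable {a : K₁ →ₗ[ℝ] F} {A : K₁ →ₗ[ℝ] K₂} {S : K₂ →ₗ[ℝ] K₂} {Γ₁ : K₁ →ₗ[ℝ] F}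
  {Γ₂ : E →ₗ[ℝ] K₂}

theorem parrottCompletion_domRestrict (hΓ₂ : K₁ ≤ ker Γ₂) :
    (parrottCompletion a A S Γ₁ Γ₂).domRestrict K₁ = a := by
  ext k
  have hk : Γ₂ k = 0 := hΓ₂ k.2
  simp [parrottCompletion, hk]

theorem adjoint_parrottCompletion_domRestrict {b : K₂ →ₗ[ℝ] E}
    (hab : ∀ (k : K₁) (l : K₂), ⟪a k, (l : F)⟫_ℝ = ⟪(k : E), b l⟫_ℝ) (hS : S.IsSymmetric)
    (hΓ₁ : range Γ₁ ≤ K₂ᗮ) (hΓ₂ : adjoint Γ₂ ∘ₗ S = K₁ᗮ.starProjection.toLinearMap ∘ₗ b) :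
    (adjoint (parrottCompletion a A S Γ₁ Γ₂)).domRestrict K₂ = b := by
  ext l
  refine ext_inner_left ℝ fun z => ?_
  calc ⟪z, adjoint (parrottCompletion a A S Γ₁ Γ₂) l⟫_ℝ
      = ⟪parrottCompletion a A S Γ₁ Γ₂ z, l⟫_ℝ := adjoint_inner_right _ _ _
    _ = ⟪(K₁.orthogonalProjectionOnto z : E), b l⟫_ℝ + ⟪z, K₁ᗮ.starProjection (b l)⟫_ℝ := by
        change ⟪a _ + (S (Γ₂ z) : F) - Γ₁ (adjoint A (Γ₂ z)), (l : F)⟫_ℝ = _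
        rw [inner_sub_left, inner_add_left, hab, Submodule.inner_left_of_mem_orthogonal l.2
          (hΓ₁ (mem_range_self _ _)), sub_zero, ← Submodule.coe_inner, hS,
          ← adjoint_inner_right Γ₂, ← LinearMap.comp_apply (adjoint Γ₂), hΓ₂]
        rfl
    _ = ⟪z, b l⟫_ℝ := by
        rw [← Submodule.starProjection_apply, Submodule.inner_starProjection_left_eq_right,
          ← inner_add_right, Submodule.starProjection_add_starProjection_orthogonal]

theorem norm_parrottCompletion_apply_le {T : K₁ →ₗ[ℝ] K₁} (ha : ∀ k, a k = A k + Γ₁ (T k))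
    (hS : S.IsSymmetric) (hSA : S ∘ₗ A = A ∘ₗ T) (hT : ∀ p, ‖A p‖ ^ 2 + ‖T p‖ ^ 2 = ‖p‖ ^ 2)
    (hS' : ∀ r, ‖adjoint A r‖ ^ 2 + ‖S r‖ ^ 2 = ‖r‖ ^ 2) (hΓ₁ : ∀ k, ‖Γ₁ k‖ ≤ ‖k‖)
    (hΓ₁K : range Γ₁ ≤ K₂ᗮ) (hΓ₂ : ∀ z, ‖Γ₂ z‖ ≤ ‖z‖) (hΓ₂K : K₁ ≤ ker Γ₂) (z : E) :
    ‖parrottCompletion a A S Γ₁ Γ₂ z‖ ≤ ‖z‖ := by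
  set p := K₁.orthogonalProjectionOnto z
  set r := Γ₂ z
  have hr : ‖r‖ ≤ ‖K₁ᗮ.starProjection z‖ := by
    have : r = Γ₂ (K₁ᗮ.starProjection z) := by
      rw [Submodule.starProjection_orthogonal_val, map_sub,
        LinearMap.mem_ker.mp (hΓ₂K (K₁.starProjection_apply_mem z)), sub_zero]
    exact this ▸ hΓ₂ _
  have hz : parrottCompletion a A S Γ₁ Γ₂ z = ((A p + S r : K₂) : F) + Γ₁ (T p - adjoint A r) := by
    change a p + (S r : F) - Γ₁ (adjoint A r) = _
    rw [ha, Submodule.coe_add, map_sub]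
    abel
  rw [← sq_le_sq₀ (norm_nonneg _) (norm_nonneg _), hz,
    K₁.norm_sq_eq_add_norm_sq_starProjection z]
  calc _ ≤ ‖p‖ ^ 2 + ‖r‖ ^ 2 := norm_sq_julia_le A hS hSA hT hS' hΓ₁ hΓ₁K p r
    _ = ‖K₁.starProjection z‖ ^ 2 + ‖r‖ ^ 2 := rfl
    _ ≤ _ := by gcongr

variable (K₁ K₂)

theorem exists_contraction_domRestrict_eq (a : K₁ →ₗ[ℝ] F) (b : K₂ →ₗ[ℝ] E)
    (ha : ∀ k, ‖a k‖ ≤ ‖k‖) (hb : ∀ l, ‖b l‖ ≤ ‖l‖)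
    (hab : ∀ (k : K₁) (l : K₂), ⟪a k, (l : F)⟫_ℝ = ⟪(k : E), b l⟫_ℝ) :
    ∃ M : E →ₗ[ℝ] F, (∀ z, ‖M z‖ ≤ ‖z‖) ∧ M.domRestrict K₁ = a ∧
      (adjoint M).domRestrict K₂ = b := by
  set A : K₁ →ₗ[ℝ] K₂ := K₂.orthogonalProjectionOnto.toLinearMap ∘ₗ a
  have hA (k : K₁) : ‖A k‖ ≤ ‖k‖ := (K₂.norm_orthogonalProjectionOnto_apply_le _).trans (ha k)
  have hAb (l : K₂) : adjoint A l = K₁.orthogonalProjectionOnto (b l) := by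
    rw [adjoint_orthogonalProjectionOnto_comp_eq hab]
    rfl
  obtain ⟨T, S, hS, hSA, hT, hS'⟩ := exists_defect_operators hA
  obtain ⟨Γ₁, hΓ₁, hΓ₁T, hΓ₁K⟩ := exists_contraction_comp_eq T
    (K₂ᗮ.starProjection.toLinearMap ∘ₗ a) fun k =>
      norm_orthogonal_starProjection_le K₂ (norm_nonneg _) (ha k) (hT k)
  obtain ⟨R, hR, hRS, hRK⟩ := exists_contraction_comp_eq S
    (K₁ᗮ.starProjection.toLinearMap ∘ₗ b) fun l =>
      norm_orthogonal_starProjection_le K₁ (norm_nonneg _) (hb l) (hAb l ▸ hS' l)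
  have hΓ₁K₂ : range Γ₁ ≤ K₂ᗮ := hΓ₁K.trans ((range_comp_le_range _ _).trans (by simp))
  have hRK₁ : K₁ ≤ ker (adjoint R) := by
    rw [← orthogonal_range]
    refine K₁.le_orthogonal_orthogonal.trans (Submodule.orthogonal_le ?_)
    exact hRK.trans ((range_comp_le_range _ _).trans (by simp))
  refine ⟨parrottCompletion a A S Γ₁ (adjoint R),
    norm_parrottCompletion_apply_le (fun k => ?_) hS hSA hT hS' hΓ₁ hΓ₁K₂
      (norm_adjoint_apply_le_norm hR) hRK₁,
    parrottCompletion_domRestrict hRK₁,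
    adjoint_parrottCompletion_domRestrict hab hS hΓ₁K₂ (by rwa [adjoint_adjoint])⟩
  rw [← LinearMap.comp_apply Γ₁, hΓ₁T]
  simp [A]

end Parrott

variable {G₁ G₂ : Type*} [NormedAddCommGroup G₁] [InnerProductSpace ℝ G₁]
  [NormedAddCommGroup G₂] [InnerProductSpace ℝ G₂]

theorem exists_contraction_comp_eq_and_adjoint_comp_eq [FiniteDimensional ℝ E]
    [FiniteDimensional ℝ F] (x : G₁ →ₗ[ℝ] E) (y : G₁ →ₗ[ℝ] F) (u : G₂ →ₗ[ℝ] F)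
    (v : G₂ →ₗ[ℝ] E) (h : ∀ c d, ⟪x c, v d⟫_ℝ = ⟪y c, u d⟫_ℝ) (hxy : ∀ c, ‖y c‖ ≤ ‖x c‖)
    (huv : ∀ d, ‖v d‖ ≤ ‖u d‖) :
    ∃ M : E →ₗ[ℝ] F, (∀ z, ‖M z‖ ≤ ‖z‖) ∧ M ∘ₗ x = y ∧ adjoint M ∘ₗ u = v := by
  obtain ⟨a, ha, hax, -⟩ := exists_contraction_comp_eq x y hxy
  obtain ⟨b, hb, hbu, -⟩ := exists_contraction_comp_eq u v huv
  obtain ⟨M, hM, hMa, hMb⟩ := exists_contraction_domRestrict_eq (range x) (range u)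
    (a.domRestrict (range x)) (b.domRestrict (range u)) (fun k => ha k) (fun l => hb l) <| by
      rintro ⟨_, c, rfl⟩ ⟨_, d, rfl⟩
      simp only [domRestrict_apply]
      rw [← LinearMap.comp_apply a, hax, ← LinearMap.comp_apply b, hbu, h]
  refine ⟨M, hM, ?_, ?_⟩
  · rw [← hax]
    ext c
    simpa using LinearMap.congr_fun hMa ⟨x c, mem_range_self x c⟩
  · rw [← hbu]
    ext d
    simpa using LinearMap.congr_fun hMb ⟨u d, mem_range_self u d⟩

theorem exists_norm_le_mul_comp_eq_and_adjoint_comp_eq_iff [FiniteDimensional ℝ E]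
    [FiniteDimensional ℝ F] {L : ℝ} (hL : 0 ≤ L) (x : G₁ →ₗ[ℝ] E) (y : G₁ →ₗ[ℝ] F)
    (u : G₂ →ₗ[ℝ] F) (v : G₂ →ₗ[ℝ] E) :
    (∃ M : E →ₗ[ℝ] F, (∀ z, ‖M z‖ ≤ L * ‖z‖) ∧ M ∘ₗ x = y ∧ adjoint M ∘ₗ u = v) ↔
      (∀ c d, ⟪x c, v d⟫_ℝ = ⟪y c, u d⟫_ℝ) ∧ (∀ c, ‖y c‖ ≤ L * ‖x c‖) ∧
        ∀ d, ‖v d‖ ≤ L * ‖u d‖ := by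
  constructor
  · rintro ⟨M, hM, rfl, rfl⟩
    exact ⟨fun c d => by simp [adjoint_inner_right], fun c => hM (x c),
      fun d => norm_adjoint_apply_le hL hM (u d)⟩
  rintro ⟨h, hxy, huv⟩
  rcases hL.eq_or_lt with rfl | hL
  · have hy : y = 0 := by ext c; simpa using hxy c
    have hv : v = 0 := by ext d; simpa using huv d
    exact ⟨0, by simp, by simp [hy], by simp [hv]⟩
  obtain ⟨M, hM, hMx, hMu⟩ := exists_contraction_comp_eq_and_adjoint_comp_eq x (L⁻¹ • y) u
    (L⁻¹ • v) (fun c d => by simp [real_inner_smul_left, real_inner_smul_right, h])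
    (fun c => by simpa [norm_smul, abs_of_pos hL, inv_mul_le_iff₀ hL] using hxy c)
    (fun d => by simpa [norm_smul, abs_of_pos hL, inv_mul_le_iff₀ hL] using huv d)
  refine ⟨L • M, fun z => ?_, ?_, ?_⟩
  · rw [LinearMap.smul_apply, norm_smul, Real.norm_of_nonneg hL.le]
    exact mul_le_mul_of_nonneg_left (hM z) hL.le
  · rw [LinearMap.smul_comp, hMx, smul_smul, mul_inv_cancel₀ hL.ne', one_smul]
  · simp [LinearMap.smul_comp, hMu, smul_smul, hL.ne']

end Operators

open Matrix

section Matrices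

variable {k l m n : Type*} [Fintype k] [Fintype l] [Fintype m] [Fintype n] [DecidableEq k]
  [DecidableEq l] [DecidableEq m] [DecidableEq n]

theorem Matrix.toEuclideanLin_transpose (A : Matrix m n ℝ) :
    toEuclideanLin Aᵀ = adjoint (toEuclideanLin A) := by
  rw [← conjTranspose_eq_transpose_of_trivial, toEuclideanLin_conjTranspose_eq_adjoint]

theorem Matrix.posSemidef_sq_smul_transpose_mul_self_sub_iff {L : ℝ} (hL : 0 ≤ L)
    (B : Matrix l n ℝ) (A : Matrix m n ℝ) :
    (L ^ 2 • (Bᵀ * B) - Aᵀ * A).PosSemidef ↔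
      ∀ z, ‖toEuclideanLin A z‖ ≤ L * ‖toEuclideanLin B z‖ := by
  rw [← isPositive_toEuclideanLin_iff, map_sub, map_smul, toLpLin_mul_same, toLpLin_mul_same,
    toEuclideanLin_transpose, toEuclideanLin_transpose]
  exact isPositive_sq_smul_adjoint_comp_self_sub_iff hL _ _

theorem Matrix.posSemidef_sq_smul_one_sub_transpose_mul_self_iff {L : ℝ} (hL : 0 ≤ L)
    (A : Matrix m n ℝ) :
    (L ^ 2 • 1 - Aᵀ * A).PosSemidef ↔ ∀ z, ‖toEuclideanLin A z‖ ≤ L * ‖z‖ := by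
  simpa using posSemidef_sq_smul_transpose_mul_self_sub_iff hL (1 : Matrix n n ℝ) A

theorem Matrix.transpose_mul_eq_transpose_mul_iff (X : Matrix l m ℝ) (V : Matrix l n ℝ)
    (Y : Matrix k m ℝ) (U : Matrix k n ℝ) :
    Xᵀ * V = Yᵀ * U ↔ ∀ c d, ⟪toEuclideanLin X c, toEuclideanLin V d⟫_ℝ =
      ⟪toEuclideanLin Y c, toEuclideanLin U d⟫_ℝ := by
  rw [← toEuclideanLin.injective.eq_iff, toLpLin_mul_same, toLpLin_mul_same,
    toEuclideanLin_transpose, toEuclideanLin_transpose, LinearMap.ext_iff, forall_comm]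
  simp only [LinearMap.comp_apply, ext_iff_inner_left ℝ (E := EuclideanSpace ℝ m),
    adjoint_inner_right]

end Matrices

/-- `L₀,L`-interpolation conditions (Theorem 3.2): existence of a linear operator `M`
with largest singular value at most `L` (i.e. `MᵀM ⪯ L²·I`) mapping the columns of `X`
to those of `Y` and (via `Mᵀ`) the columns of `U` to those of `V`, if and only if the
three Gram conditions hold. -/
theorem linear_operator_interpolation
    (n m N₁ N₂ : ℕ) (L : ℝ) (hL : 0 ≤ L)
    (X : Matrix (Fin n) (Fin N₁) ℝ) (Y : Matrix (Fin m) (Fin N₁) ℝ)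
    (U : Matrix (Fin m) (Fin N₂) ℝ) (V : Matrix (Fin n) (Fin N₂) ℝ) :
    (∃ M : Matrix (Fin m) (Fin n) ℝ,
        (L ^ 2 • (1 : Matrix (Fin n) (Fin n) ℝ) - Mᵀ * M).PosSemidef ∧
        Y = M * X ∧ V = Mᵀ * U) ↔
      (Xᵀ * V = Yᵀ * U ∧
        (L ^ 2 • (Xᵀ * X) - Yᵀ * Y).PosSemidef ∧
        (L ^ 2 • (Uᵀ * U) - Vᵀ * V).PosSemidef) := by
  rw [transpose_mul_eq_transpose_mul_iff, posSemidef_sq_smul_transpose_mul_self_sub_iff hL,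
    posSemidef_sq_smul_transpose_mul_self_sub_iff hL,
    ← exists_norm_le_mul_comp_eq_and_adjoint_comp_eq_iff hL, toEuclideanLin.surjective.exists]
  refine exists_congr fun M => and_congr (posSemidef_sq_smul_one_sub_transpose_mul_self_iff hL M) ?_
  rw [← toEuclideanLin.injective.eq_iff, ← toEuclideanLin.injective.eq_iff (a := V),
    toLpLin_mul_same, toLpLin_mul_same, toEuclideanLin_transpose]
  exact and_congr eq_comm eq_comm
end

section
/- Let X and Y be real d×N matrices and L ≥ 0. There exists a real skew-symmetric d×d matrix Q (i.e., Qᵀ = −Q) with σ_max(Q) ≤ L such that Y = Q·X if and only if Xᵀ·Y = −Yᵀ·X and Yᵀ·Y ⪯ L²·Xᵀ·X. -/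
/-!
Let `X⁺` be the Moore–Penrose pseudo-inverse, `P = X X⁺` the orthogonal projection onto the range
of `X` and `M = Y X⁺`. Since `YᵀY ⪯ L² XᵀX`, `Y` vanishes on the kernel of `X`, so `M X = Y` and
`MᵀM ⪯ L² P`; the skewness of `XᵀY` says that the compression `A = P M` of `M` to the range of `P`
is skew. Write `M = A + B` with `B = (1 - P) M`. Then `BᵀB ⪯ T := L² P + A²`, so `B = C S` with
`S = T^{1/2}` and `CᵀC ⪯ 1`, and Parrott's completion `Q = A + B - Bᵀ - C A Cᵀ` is skew, extends
`M`, and satisfies `L² - QᵀQ = Nᵀ (1 - CᵀC) N + L² ((1 - P) - C Cᵀ)` with `N = S - A Cᵀ`; the last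
term is `⪰ 0` because `CᵀC ⪯ 1` forces `C Cᵀ ⪯ 1`. The converse is immediate:
`L² XᵀX - YᵀY = Xᵀ (L² - QᵀQ) X`.
-/

open Matrix
open scoped MatrixOrder

theorem mul_self_skew_completion_eq {R : Type*} [Ring R] {a s c c' : R}
    (hac : a * c = 0) (hc'a : c' * a = 0) (hsc : s * c = 0) (hc's : c' * s = 0)
    (has : a * s = s * a) :
    (a + c * s - s * c' - c * a * c') * (a + c * s - s * c' - c * a * c') =
      (s + c * a) * (1 - c' * c) * (s - a * c') - s * s + a * a - c * (s * s - a * a) * c' := by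
  have hac' : ∀ x, a * (c * x) = 0 := fun x => by rw [← mul_assoc, hac, zero_mul]
  have hsc' : ∀ x, s * (c * x) = 0 := fun x => by rw [← mul_assoc, hsc, zero_mul]
  have hc's' : ∀ x, c' * (s * x) = 0 := fun x => by rw [← mul_assoc, hc's, zero_mul]
  have has' : ∀ x, s * (a * x) = a * (s * x) := fun x => by rw [← mul_assoc, ← has, mul_assoc]
  simp only [mul_add, add_mul, mul_sub, sub_mul, mul_one, mul_assoc, hac', hc'a, hsc', hc's',
    ← has, has', mul_zero]
  abel

theorem mul_star_self_le_one_of_star_mul_self_le_one {A : Type*} [Ring A] [StarRing A]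
    [TopologicalSpace A] [Algebra ℝ A] [PartialOrder A] [StarOrderedRing A]
    [ContinuousFunctionalCalculus ℝ A IsSelfAdjoint] [NonnegSpectrumClass ℝ A] {a : A}
    (h : star a * a ≤ 1) : a * star a ≤ 1 := by
  rw [CFC.le_one_iff (R := ℝ) _ (.star_mul_self a)] at h
  rw [CFC.le_one_iff (R := ℝ) _ (.mul_star_self a)]
  intro x hx
  by_cases hx0 : x = 0
  · simp [hx0]
  · have hx' : x ∈ spectrum ℝ (a * star a) \ {0} := ⟨hx, hx0⟩
    rw [spectrum.nonzero_mul_comm] at hx'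
    exact h x hx'.1

namespace Matrix

lemma transpose_eq_self_of_isSelfAdjoint {n : Type*} {A : Matrix n n ℝ} (h : IsSelfAdjoint A) :
    Aᵀ = A := by
  rw [← conjTranspose_eq_transpose_of_trivial]
  exact h

variable {l m n : Type*} [Fintype l] [Fintype m] [Fintype n]

lemma transpose_mul_mul_le_of_le {A B : Matrix m m ℝ} (h : A ≤ B) (C : Matrix m n ℝ) :
    Cᵀ * A * C ≤ Cᵀ * B * C := by
  rw [le_iff, ← Matrix.sub_mul, ← Matrix.mul_sub]
  simpa using h.conjTranspose_mul_mul_same C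

lemma transpose_mul_self_nonneg (C : Matrix m n ℝ) : 0 ≤ Cᵀ * C := by
  simpa using (posSemidef_conjTranspose_mul_self C).nonneg

lemma mul_eq_zero_of_transpose_mul_self_le {A : Matrix m m ℝ} {Z : Matrix l m ℝ}
    {K : Matrix m n ℝ} (h : Zᵀ * Z ≤ A) (hK : A * K = 0) : Z * K = 0 := by
  have hle : (Z * K)ᵀ * (Z * K) ≤ 0 := by
    simpa [Matrix.mul_assoc, hK] using transpose_mul_mul_le_of_le h K
  have h0 := le_antisymm hle (transpose_mul_self_nonneg (Z * K))
  simpa using (conjTranspose_mul_self_eq_zero (A := Z * K)).mp (by simpa using h0)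

section Projection

variable [DecidableEq m] {P : Matrix m m ℝ} (hPt : Pᵀ = P) (hPP : P * P = P)
include hPt hPP

lemma transpose_one_sub_mul_one_sub : (1 - P)ᵀ * (1 - P) = 1 - P := by
  rw [transpose_sub, transpose_one, hPt, Matrix.sub_mul, Matrix.one_mul, Matrix.mul_sub,
    Matrix.mul_one, hPP, sub_self, sub_zero]

lemma le_one_of_transpose_eq_of_mul_self_eq : P ≤ 1 := by
  rw [← sub_nonneg, ← transpose_one_sub_mul_one_sub hPt hPP]
  exact transpose_mul_self_nonneg (1 - P)

end Projection

lemma isSelfAdjoint_transpose_mul_self (F : Matrix m n ℝ) : IsSelfAdjoint (Fᵀ * F) := by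
  have h := (posSemidef_conjTranspose_mul_self F).isHermitian
  rwa [conjTranspose_eq_transpose_of_trivial] at h

section PseudoInverse

variable [DecidableEq n]

lemma cfc_mul_cfc (G : Matrix n n ℝ) (f g : ℝ → ℝ) :
    cfc f G * cfc g G = cfc (fun x => f x * g x) G :=
  (cfc_mul f g G (G.finite_real_spectrum.continuousOn f)
    (G.finite_real_spectrum.continuousOn g)).symm

lemma mul_cfc_inv_mul_self {G : Matrix n n ℝ} (hG : IsSelfAdjoint G) :
    G * cfc (fun x : ℝ => x⁻¹) G * G = G := calc
  _ = cfc (fun x => x) G * cfc (fun x : ℝ => x⁻¹) G * cfc (fun x => x) G := by rw [cfc_id' ℝ G]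
  _ = cfc (fun x => x) G := by simp only [cfc_mul_cfc, mul_inv_mul_cancel]
  _ = G := cfc_id' ℝ G

/-- The Moore–Penrose pseudo-inverse `(FᵀF)⁺ Fᵀ`: the functional calculus of `x ↦ x⁻¹` inverts
`FᵀF` on its range and vanishes on its kernel, because `0⁻¹ = 0` in `ℝ`. -/
noncomputable def pinv (F : Matrix m n ℝ) : Matrix n m ℝ :=
  cfc (fun x : ℝ => x⁻¹) (Fᵀ * F) * Fᵀ

lemma transpose_mul_pinv (F : Matrix m n ℝ) : (F * pinv F)ᵀ = F * pinv F := by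
  rw [pinv, transpose_mul, transpose_mul, transpose_transpose,
    transpose_eq_self_of_isSelfAdjoint (cfc_predicate _ _), Matrix.mul_assoc]

lemma mul_pinv_mul_of_le {F : Matrix m n ℝ} {Z : Matrix l n ℝ} {c : ℝ}
    (h : Zᵀ * Z ≤ c • (Fᵀ * F)) : Z * pinv F * F = Z := by
  have hK : c • (Fᵀ * F) * (1 - cfc (fun x : ℝ => x⁻¹) (Fᵀ * F) * (Fᵀ * F)) = 0 := by
    rw [Matrix.smul_mul, Matrix.mul_sub, Matrix.mul_one, ← Matrix.mul_assoc,
      mul_cfc_inv_mul_self (isSelfAdjoint_transpose_mul_self F), sub_self, smul_zero]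
  have hZ := mul_eq_zero_of_transpose_mul_self_le h hK
  rw [Matrix.mul_sub, Matrix.mul_one, sub_eq_zero] at hZ
  rw [pinv, Matrix.mul_assoc, Matrix.mul_assoc]
  exact hZ.symm

lemma mul_pinv_mul (F : Matrix m n ℝ) : F * pinv F * F = F :=
  mul_pinv_mul_of_le (c := 1) (by rw [one_smul])

lemma mul_pinv_mul_mul_pinv (F : Matrix m n ℝ) : F * pinv F * (F * pinv F) = F * pinv F := by
  rw [← Matrix.mul_assoc, mul_pinv_mul]

lemma mul_pinv_le_one [DecidableEq m] (F : Matrix m n ℝ) : F * pinv F ≤ 1 :=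
  le_one_of_transpose_eq_of_mul_self_eq (transpose_mul_pinv F) (mul_pinv_mul_mul_pinv F)

lemma transpose_mul_pinv_le {F : Matrix m n ℝ} {Z : Matrix l n ℝ} {c : ℝ}
    (h : Zᵀ * Z ≤ c • (Fᵀ * F)) : (Z * pinv F)ᵀ * (Z * pinv F) ≤ c • (F * pinv F) := calc
  _ = (pinv F)ᵀ * (Zᵀ * Z) * pinv F := by simp only [transpose_mul, Matrix.mul_assoc]
  _ ≤ (pinv F)ᵀ * (c • (Fᵀ * F)) * pinv F := transpose_mul_mul_le_of_le h _
  _ = c • ((F * pinv F)ᵀ * (F * pinv F)) := by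
    simp only [transpose_mul, Matrix.mul_smul, Matrix.smul_mul, Matrix.mul_assoc]
  _ = c • (F * pinv F) := by rw [transpose_mul_pinv, mul_pinv_mul_mul_pinv]

lemma transpose_mul_pinv_mul_mul_pinv {F Z : Matrix m n ℝ} (h : Fᵀ * Z = -(Zᵀ * F)) :
    (F * pinv F * (Z * pinv F))ᵀ = -(F * pinv F * (Z * pinv F)) := by
  have hF : F * pinv F * (Z * pinv F) = (pinv F)ᵀ * (Fᵀ * Z) * pinv F := by
    rw [← transpose_mul_pinv, transpose_mul]
    simp only [Matrix.mul_assoc]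
  rw [hF]
  simp only [transpose_mul, transpose_neg, transpose_transpose, h, Matrix.mul_neg, Matrix.neg_mul,
    neg_neg, Matrix.mul_assoc]

end PseudoInverse

/-- When `A` acts on the range of a projection `P` and `C` maps it to `ker P`, this is the block
matrix `[[A, -(C S)ᵀ], [C S, -C A Cᵀ]]` with respect to `range P ⊕ ker P`: Parrott's
skew-symmetric completion of the column `[A; C S]`. -/
def skewCompletion (A S C : Matrix n n ℝ) : Matrix n n ℝ :=
  A + C * S - S * Cᵀ - C * A * Cᵀ

lemma transpose_skewCompletion {A S C : Matrix n n ℝ} (hA : Aᵀ = -A) (hS : Sᵀ = S) :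
    (skewCompletion A S C)ᵀ = -skewCompletion A S C := by
  simp only [skewCompletion, transpose_sub, transpose_add, transpose_mul, transpose_transpose, hA,
    hS, Matrix.mul_neg, Matrix.neg_mul, Matrix.mul_assoc]
  abel

variable [DecidableEq n]

lemma transpose_sqrt (T : Matrix n n ℝ) : (CFC.sqrt T)ᵀ = CFC.sqrt T :=
  transpose_eq_self_of_isSelfAdjoint (.of_nonneg (CFC.sqrt_nonneg T))

section Sqrt

variable {T : Matrix n n ℝ} (hT : 0 ≤ T)
include hT

lemma sqrt_mul_eq_zero {K : Matrix n m ℝ} (hK : T * K = 0) : CFC.sqrt T * K = 0 :=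
  mul_eq_zero_of_transpose_mul_self_le
    (by rw [transpose_sqrt, CFC.sqrt_mul_sqrt_self T hT]) hK

end Sqrt

lemma commute_sqrt {T A : Matrix n n ℝ} (h : Commute T A) : Commute (CFC.sqrt T) A := by
  rw [CFC.sqrt_eq_cfc]
  exact h.cfc_nnreal _

variable {A S C P : Matrix n n ℝ} {L : ℝ}

lemma transpose_mul_skewCompletion_le (hA : Aᵀ = -A) (hS : Sᵀ = S)
    (hSS : S * S = L ^ 2 • P + A * A) (hAS : A * S = S * A) (hAC : A * C = 0) (hSC : S * C = 0)
    (hPt : Pᵀ = P) (hPP : P * P = P) (hCP : C * P = C) (hPC : P * C = 0) (hC : Cᵀ * C ≤ 1) :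
    (skewCompletion A S C)ᵀ * skewCompletion A S C ≤ L ^ 2 • 1 := by
  have hCtA : Cᵀ * A = 0 := by
    rw [← neg_eq_zero, ← Matrix.mul_neg, ← hA, ← transpose_mul, hAC, transpose_zero]
  have hCtS : Cᵀ * S = 0 := by rw [← hS, ← transpose_mul, hSC, transpose_zero]
  have hN : (S - A * Cᵀ)ᵀ = S + C * A := by
    rw [transpose_sub, transpose_mul, transpose_transpose, hA, hS, Matrix.mul_neg, sub_neg_eq_add]
  have hSA : S * S - A * A = L ^ 2 • P := by rw [hSS, add_sub_cancel_right]
  have key : L ^ 2 • 1 - (skewCompletion A S C)ᵀ * skewCompletion A S C =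
      (S - A * Cᵀ)ᵀ * (1 - Cᵀ * C) * (S - A * Cᵀ) + L ^ 2 • (1 - P - C * Cᵀ) := by
    rw [transpose_skewCompletion hA hS, Matrix.neg_mul, sub_neg_eq_add, skewCompletion,
      mul_self_skew_completion_eq hAC hCtA hSC hCtS hAS, hN, hSA, Matrix.mul_smul, Matrix.smul_mul,
      hCP, hSS, smul_sub, smul_sub]
    abel
  have hCCt : C * Cᵀ ≤ 1 := by
    have h := mul_star_self_le_one_of_star_mul_self_le_one (a := C)
      (by rw [star_eq_conjTranspose, conjTranspose_eq_transpose_of_trivial]; exact hC)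
    rwa [star_eq_conjTranspose, conjTranspose_eq_transpose_of_trivial] at h
  have hCCt' : C * Cᵀ ≤ 1 - P := calc
    C * Cᵀ = (1 - P)ᵀ * (C * Cᵀ) * (1 - P) := by
      have h1P : (1 - P) * C = C := by rw [Matrix.sub_mul, Matrix.one_mul, hPC, sub_zero]
      have hCt1P : Cᵀ * (1 - P) = Cᵀ := by
        rw [Matrix.mul_sub, Matrix.mul_one, ← hPt, ← transpose_mul, hPC, transpose_zero, sub_zero]
      rw [transpose_sub, transpose_one, hPt, ← Matrix.mul_assoc, h1P, Matrix.mul_assoc, hCt1P]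
    _ ≤ (1 - P)ᵀ * 1 * (1 - P) := transpose_mul_mul_le_of_le hCCt _
    _ = 1 - P := by rw [Matrix.mul_one, transpose_one_sub_mul_one_sub hPt hPP]
  rw [le_iff, key]
  refine PosSemidef.add ?_ ((sub_nonneg.mpr hCCt').posSemidef.smul (sq_nonneg L))
  have h := transpose_mul_mul_le_of_le (sub_nonneg.mpr hC) (S - A * Cᵀ)
  rw [Matrix.mul_zero, Matrix.zero_mul] at h
  exact h.posSemidef

theorem exists_skew_completion {P A B : Matrix n n ℝ} (hPt : Pᵀ = P) (hPP : P * P = P)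
    (hA : Aᵀ = -A) (hPA : P * A = A) (hAP : A * P = A) (hPB : P * B = 0)
    (hB : Bᵀ * B ≤ L ^ 2 • P + A * A) :
    ∃ Q : Matrix n n ℝ, Qᵀ = -Q ∧ Qᵀ * Q ≤ L ^ 2 • 1 ∧ Q * P = A + B := by
  set T := L ^ 2 • P + A * A with hTdef
  have hT : 0 ≤ T := (transpose_mul_self_nonneg B).trans hB
  set S := CFC.sqrt T
  have hSS : S * S = T := CFC.sqrt_mul_sqrt_self T hT
  have hSP : S * P = S := by
    have hTP : T * (1 - P) = 0 := by
      rw [Matrix.mul_sub, Matrix.mul_one, hTdef, Matrix.add_mul, Matrix.smul_mul, hPP,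
        Matrix.mul_assoc A A P, hAP, sub_self]
    have h := sqrt_mul_eq_zero hT hTP
    rwa [Matrix.mul_sub, Matrix.mul_one, sub_eq_zero, eq_comm] at h
  have hAS : A * S = S * A := by
    refine (commute_sqrt ?_).eq.symm
    change T * A = A * T
    rw [hTdef, Matrix.add_mul, Matrix.mul_add, Matrix.smul_mul, Matrix.mul_smul, hPA, hAP,
      Matrix.mul_assoc]
  have hBS : Bᵀ * B ≤ (1 : ℝ) • (Sᵀ * S) := by rwa [one_smul, transpose_sqrt, hSS]
  set C := B * pinv S with hCdef
  have hCS : C * S = B := mul_pinv_mul_of_le hBS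
  have hC : Cᵀ * C ≤ 1 :=
    (transpose_mul_pinv_le hBS).trans (by rw [one_smul]; exact mul_pinv_le_one S)
  have hPC : P * C = 0 := by rw [← Matrix.mul_assoc, hPB, Matrix.zero_mul]
  have hCP : C * P = C := by
    rw [hCdef, Matrix.mul_assoc, pinv, Matrix.mul_assoc, transpose_sqrt, hSP]
  have hAC : A * C = 0 := by rw [← hAP, Matrix.mul_assoc, hPC, Matrix.mul_zero]
  have hSC : S * C = 0 := by rw [← hSP, Matrix.mul_assoc, hPC, Matrix.mul_zero]
  have hCtP : Cᵀ * P = 0 := by rw [← hPt, ← transpose_mul, hPC, transpose_zero]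
  refine ⟨skewCompletion A S C, transpose_skewCompletion hA (transpose_sqrt T),
    transpose_mul_skewCompletion_le hA (transpose_sqrt T) hSS hAS hAC hSC hPt hPP hCP hPC hC, ?_⟩
  rw [skewCompletion, Matrix.sub_mul, Matrix.sub_mul, Matrix.add_mul, hAP, Matrix.mul_assoc C S,
    hSP, hCS, Matrix.mul_assoc S, hCtP, Matrix.mul_zero, Matrix.mul_assoc, Matrix.mul_assoc, hCtP]
  simp

theorem exists_skew_extension {P M : Matrix n n ℝ} (hPt : Pᵀ = P) (hPP : P * P = P)
    (hMP : M * P = M) (hskew : (P * M)ᵀ = -(P * M)) (hM : Mᵀ * M ≤ L ^ 2 • P) :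
    ∃ Q : Matrix n n ℝ, Qᵀ = -Q ∧ Qᵀ * Q ≤ L ^ 2 • 1 ∧ Q * P = M := by
  have hPA : P * (P * M) = P * M := by rw [← Matrix.mul_assoc, hPP]
  have hAP : P * M * P = P * M := by rw [Matrix.mul_assoc, hMP]
  have hPB : P * (M - P * M) = 0 := by rw [Matrix.mul_sub, hPA, sub_self]
  have hAtB : (P * M)ᵀ * (M - P * M) = 0 := by
    rw [transpose_mul, hPt, Matrix.mul_assoc, hPB, Matrix.mul_zero]
  have hB : (M - P * M)ᵀ * (M - P * M) ≤ L ^ 2 • P + P * M * (P * M) := by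
    have hM' : Mᵀ * M = (P * M)ᵀ * (P * M) + (M - P * M)ᵀ * (M - P * M) := by
      have hBtA : (M - P * M)ᵀ * (P * M) = 0 := by
        rw [← transpose_eq_zero, transpose_mul, transpose_transpose, hAtB]
      conv_lhs => rw [← add_sub_cancel (P * M) M]
      rw [transpose_add, Matrix.add_mul, Matrix.mul_add, Matrix.mul_add, hAtB, hBtA, add_zero,
        zero_add]
    rw [← sub_neg_eq_add, ← Matrix.neg_mul, ← hskew, le_sub_iff_add_le, add_comm, ← hM']
    exact hM
  obtain ⟨Q, hQt, hQ, hQP⟩ := exists_skew_completion hPt hPP hskew hPA hAP hPB hB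
  exact ⟨Q, hQt, hQ, by rw [hQP, add_sub_cancel]⟩

end Matrix

theorem skew_symmetric_operator_interpolation_general
    (d N : ℕ) (L : ℝ)
    (X Y : Matrix (Fin d) (Fin N) ℝ) :
    (∃ Q : Matrix (Fin d) (Fin d) ℝ,
        Qᵀ = -Q ∧
        (L ^ 2 • (1 : Matrix (Fin d) (Fin d) ℝ) - Qᵀ * Q).PosSemidef ∧
        Y = Q * X) ↔
      (Xᵀ * Y = -(Yᵀ * X) ∧ (L ^ 2 • (Xᵀ * X) - Yᵀ * Y).PosSemidef) := by
  constructor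
  · rintro ⟨Q, hQt, hQ, rfl⟩
    constructor
    · simp only [transpose_mul, hQt, Matrix.mul_neg, Matrix.neg_mul, Matrix.mul_assoc, neg_neg]
    · change (Q * X)ᵀ * (Q * X) ≤ L ^ 2 • (Xᵀ * X)
      simpa [Matrix.mul_assoc] using transpose_mul_mul_le_of_le hQ X
  · rintro ⟨hskew, hle⟩
    have hYX : Y * pinv X * X = Y := mul_pinv_mul_of_le hle
    obtain ⟨Q, hQt, hQ, hQP⟩ := exists_skew_extension (transpose_mul_pinv X)
      (mul_pinv_mul_mul_pinv X) (by rw [← Matrix.mul_assoc, hYX])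
      (transpose_mul_pinv_mul_mul_pinv hskew) (transpose_mul_pinv_le hle)
    refine ⟨Q, hQt, hQ, ?_⟩
    calc Y = Y * pinv X * X := hYX.symm
      _ = Q * (X * pinv X) * X := by rw [hQP]
      _ = Q * X := by rw [Matrix.mul_assoc, mul_pinv_mul]

/-- Skew-symmetric operator interpolation conditions (Corollary 3.3): there exists a
skew-symmetric `Q` with `σ_max(Q) ≤ L` (i.e. `QᵀQ ⪯ L²·I`) such that `Y = Q·X` if and
only if `XᵀY = −YᵀX` and `YᵀY ⪯ L²·XᵀX`. -/
theorem skew_symmetric_operator_interpolation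
    (d N : ℕ) (L : ℝ) (hL : 0 ≤ L)
    (X Y : Matrix (Fin d) (Fin N) ℝ) :
    (∃ Q : Matrix (Fin d) (Fin d) ℝ,
        Qᵀ = -Q ∧
        (L ^ 2 • (1 : Matrix (Fin d) (Fin d) ℝ) - Qᵀ * Q).PosSemidef ∧
        Y = Q * X) ↔
      (Xᵀ * Y = -(Yᵀ * X) ∧ (L ^ 2 • (Xᵀ * X) - Yᵀ * Y).PosSemidef) :=
  skew_symmetric_operator_interpolation_general d N L X Y
end

section
/- Let X and Y be real d×N matrices and let μ, L be real numbers with −∞ < μ ≤ L < ∞. There exists a real symmetric d×d matrix Q with μ·I ⪯ Q ⪯ L·I such that Y = Q·X if and only if Xᵀ·Y = Yᵀ·X and (Y − μ·X)ᵀ·(L·X − Y) ⪰ 0. -/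
/-!
If `Q = Qᵀ` with `μ ⪯ Q ⪯ L` and `Y = QX`, then `(Y - μX)ᵀ(LX - Y) = Xᵀ(Q - μ)(L - Q)X`, and the
product of the commuting positive semidefinite matrices `Q - μ` and `L - Q` is positive
semidefinite.

Conversely, put `A = Y - μX` and `B = LX - Y`, so that `A + B = (L - μ)X` and `AᵀB ⪰ 0`. Let `F⁺` be
the pseudoinverse of `F = Aᵀ(A + B) ⪰ AᵀA`. Then `R = A F⁺ Aᵀ ⪰ 0` satisfies `R(A + B) = A`,
because `AᵀA ⪯ F` forces `A` to vanish on `ker F`, and `R - R² = A F⁺ (AᵀB) F⁺ Aᵀ ⪰ 0`, whence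
`R ⪯ 1`. The matrix `Q = μ + (L - μ)R` does the job.
-/

open Matrix
open scoped MatrixOrder ComplexOrder

theorem IsSelfAdjoint.le_one_of_mul_self_le {R : Type*} [Ring R] [PartialOrder R] [StarRing R]
    [StarOrderedRing R] {a : R} (ha : IsSelfAdjoint a) (h : a * a ≤ a) : a ≤ 1 := by
  have h_eq : 1 - a = star (1 - a) * (1 - a) + (a - a * a) := by
    rw [star_sub, star_one, ha.star_eq]; noncomm_ring
  rw [← sub_nonneg, h_eq]
  exact add_nonneg (star_mul_self_nonneg _) (sub_nonneg.2 h)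

namespace Matrix

variable {m n k 𝕜 : Type*} [RCLike 𝕜] [Fintype m] [Fintype n]

theorem exists_nonneg_reflexive_generalized_inverse [DecidableEq n] {F : Matrix n n 𝕜}
    (hF : 0 ≤ F) :
    ∃ M : Matrix n n 𝕜, 0 ≤ M ∧ M * F * M = M ∧ F * M * F = F := by
  have hc (f : ℝ → ℝ) : ContinuousOn f (spectrum ℝ F) := F.finite_real_spectrum.continuousOn f
  have hmul (f g : ℝ → ℝ) : cfc f F * cfc g F = cfc (fun x => f x * g x) F :=
    (cfc_mul f g F (hc f) (hc g)).symm
  have hid : cfc id F = F := cfc_id ℝ F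
  have hmul_id (f : ℝ → ℝ) : cfc f F * F = cfc (fun x => f x * x) F := by
    simpa only [hid, id_eq] using hmul f id
  have hid_mul (f : ℝ → ℝ) : F * cfc f F = cfc (fun x => x * f x) F := by
    simpa only [hid, id_eq] using hmul id f
  refine ⟨cfc (·⁻¹ : ℝ → ℝ) F, cfc_nonneg fun x hx => inv_nonneg.2 ?_, ?_, ?_⟩
  · exact spectrum_nonneg_of_nonneg hF hx
  · rw [hmul_id, hmul]
    exact cfc_congr fun x _ => by simpa using mul_inv_mul_cancel x⁻¹
  · rw [hid_mul, hmul_id]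
    exact (cfc_congr fun x _ => mul_inv_mul_cancel x).trans hid

theorem mul_eq_zero_of_conjTranspose_mul_self_le [Fintype k] {A : Matrix m n 𝕜} {F : Matrix n n 𝕜}
    {N : Matrix n k 𝕜} (hAF : Aᴴ * A ≤ F) (hFN : F * N = 0) : A * N = 0 := by
  have h : (0 - (A * N)ᴴ * (A * N)).PosSemidef := by
    convert (le_iff.1 hAF).conjTranspose_mul_mul_same N using 1
    simp only [Matrix.mul_sub, Matrix.sub_mul, Matrix.mul_assoc, hFN, Matrix.mul_zero,
      conjTranspose_mul]
  exact conjTranspose_mul_self_eq_zero.1 <|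
    le_antisymm h (nonneg_iff_posSemidef.2 (posSemidef_conjTranspose_mul_self _))

theorem exists_nonneg_le_one_mul_add_eq [DecidableEq m] [DecidableEq n] (A B : Matrix m n 𝕜)
    (h : 0 ≤ Aᴴ * B) :
    ∃ R : Matrix m m 𝕜, 0 ≤ R ∧ R ≤ 1 ∧ R * (A + B) = A := by
  set F := Aᴴ * (A + B) with hF
  have hAF : Aᴴ * A ≤ F := by rw [hF, Matrix.mul_add]; exact le_add_of_nonneg_right h
  obtain ⟨M, hM, hMFM, hFMF⟩ := exists_nonneg_reflexive_generalized_inverse <|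
    (nonneg_iff_posSemidef.2 (posSemidef_conjTranspose_mul_self A)).trans hAF
  have hAMF : A * M * F = A := by
    have h0 := mul_eq_zero_of_conjTranspose_mul_self_le hAF (N := 1 - M * F)
      (by rw [Matrix.mul_sub, Matrix.mul_one, ← Matrix.mul_assoc, hFMF, sub_self])
    rw [Matrix.mul_sub, Matrix.mul_one, sub_eq_zero] at h0
    rw [Matrix.mul_assoc, ← h0]
  have hR : 0 ≤ A * M * Aᴴ :=
    nonneg_iff_posSemidef.2 ((nonneg_iff_posSemidef.1 hM).mul_mul_conjTranspose_same A)
  refine ⟨A * M * Aᴴ, hR, hR.isSelfAdjoint.le_one_of_mul_self_le ?_, by rwa [Matrix.mul_assoc _ Aᴴ]⟩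
  have h_eq : A * M * Aᴴ - A * M * Aᴴ * (A * M * Aᴴ) = A * M * (Aᴴ * B) * (A * M)ᴴ := by
    rw [conjTranspose_mul, (nonneg_iff_posSemidef.1 hM).isHermitian.eq]
    nth_rewrite 1 [← hMFM]
    simp only [hF, Matrix.mul_add, Matrix.add_mul, Matrix.mul_assoc]
    abel
  rw [← sub_nonneg, h_eq]
  exact nonneg_iff_posSemidef.2 ((nonneg_iff_posSemidef.1 h).mul_mul_conjTranspose_same _)

variable [DecidableEq m] {μ L : ℝ}

theorem nonneg_conjTranspose_mul_sub_smul_mul_smul_sub_mul {Q : Matrix m m 𝕜}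
    (hμQ : μ • 1 ≤ Q) (hQL : Q ≤ L • 1) (X : Matrix m n 𝕜) :
    0 ≤ (Q * X - μ • X)ᴴ * (L • X - Q * X) := by
  have hcomm : Commute (Q - μ • 1) (L • 1 - Q) :=
    (((Commute.one_right Q).smul_right L).sub_right (Commute.refl Q)).sub_left
      ((Commute.one_left _).smul_left μ)
  have hμX : Q * X - μ • X = (Q - μ • 1) * X := by
    rw [Matrix.sub_mul, Matrix.smul_mul, Matrix.one_mul]
  have hLX : L • X - Q * X = (L • 1 - Q) * X := by
    rw [Matrix.sub_mul, Matrix.smul_mul, Matrix.one_mul]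
  rw [hμX, hLX, conjTranspose_mul, (le_iff.1 hμQ).isHermitian.eq, Matrix.mul_assoc,
    ← Matrix.mul_assoc _ _ X, ← Matrix.mul_assoc]
  exact nonneg_iff_posSemidef.2 <| (nonneg_iff_posSemidef.1 <|
    hcomm.mul_nonneg (sub_nonneg.2 hμQ) (sub_nonneg.2 hQL)).conjTranspose_mul_mul_same X

theorem exists_smul_one_le_le_smul_one_mul_eq [DecidableEq n] (hμL : μ ≤ L) {X Y : Matrix m n 𝕜}
    (h : 0 ≤ (Y - μ • X)ᴴ * (L • X - Y)) :
    ∃ Q : Matrix m m 𝕜, μ • 1 ≤ Q ∧ Q ≤ L • 1 ∧ Q * X = Y := by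
  obtain ⟨R, hR0, hR1, hRX⟩ := exists_nonneg_le_one_mul_add_eq (Y - μ • X) (L • X - Y) h
  have hLμ : 0 ≤ L - μ := sub_nonneg.2 hμL
  refine ⟨μ • 1 + (L - μ) • R, ?_, ?_, ?_⟩
  · rw [le_iff, add_sub_cancel_left]
    exact (nonneg_iff_posSemidef.1 hR0).smul hLμ
  · rw [le_iff, show L • 1 - (μ • 1 + (L - μ) • R) = (L - μ) • (1 - R) by module]
    exact (le_iff.1 hR1).smul hLμ
  · rw [show Y - μ • X + (L • X - Y) = (L - μ) • X by module, Matrix.mul_smul] at hRX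
    rw [Matrix.add_mul, Matrix.smul_mul, Matrix.smul_mul, Matrix.one_mul, hRX]
    abel

end Matrix

/-- Symmetric operator interpolation conditions (Theorem 3.4): there exists a symmetric
`Q` with `μ·I ⪯ Q ⪯ L·I` such that `Y = Q·X` if and only if `XᵀY = YᵀX` and
`(Y − μX)ᵀ(LX − Y) ⪰ 0`. -/
theorem symmetric_operator_interpolation
    (d N : ℕ) (μ L : ℝ) (hμL : μ ≤ L)
    (X Y : Matrix (Fin d) (Fin N) ℝ) :
    (∃ Q : Matrix (Fin d) (Fin d) ℝ,
        Qᵀ = Q ∧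
        (Q - μ • (1 : Matrix (Fin d) (Fin d) ℝ)).PosSemidef ∧
        (L • (1 : Matrix (Fin d) (Fin d) ℝ) - Q).PosSemidef ∧
        Y = Q * X) ↔
      (Xᵀ * Y = Yᵀ * X ∧ ((Y - μ • X)ᵀ * (L • X - Y)).PosSemidef) := by
  constructor
  · rintro ⟨Q, hQ, hμQ, hQL, rfl⟩
    refine ⟨by rw [transpose_mul, hQ, Matrix.mul_assoc], ?_⟩
    simpa only [conjTranspose_eq_transpose_of_trivial, nonneg_iff_posSemidef] using
      nonneg_conjTranspose_mul_sub_smul_mul_smul_sub_mul (le_iff.2 hμQ) (le_iff.2 hQL) X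
  · rintro ⟨-, h⟩
    have h' : 0 ≤ (Y - μ • X)ᴴ * (L • X - Y) := by
      rwa [nonneg_iff_posSemidef, conjTranspose_eq_transpose_of_trivial]
    obtain ⟨Q, hμQ, hQL, rfl⟩ := exists_smul_one_le_le_smul_one_mul_eq hμL h'
    have hQ : Qᴴ = Q := by
      simpa using (le_iff.1 hμQ).isHermitian.eq
    exact ⟨Q, by rwa [← conjTranspose_eq_transpose_of_trivial], hμQ, hQL, rfl⟩
end

section
/- Let X be a real n×N₁ matrix, Y a real m×N₁ matrix, U a real m×N₂ matrix, and V a real n×N₂ matrix. There exists a real m×n matrix M (with no bound on its singular values) such that Y = M·X and V = Mᵀ·U if and only if there exists L > 0 such that: Xᵀ·V = Yᵀ·U, the 2N₁×2N₁ block matrix [[Xᵀ·X, Yᵀ·Y],[Yᵀ·Y, L²·I]] is positive semidefinite, and the 2N₂×2N₂ block matrix [[Uᵀ·U, Vᵀ·V],[Vᵀ·V, L²·I]] is positive semidefinite. -/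
/-!
At `(a, b)` the quadratic form of `[[AᵀA, BᵀB], [BᵀB, c • 1]]` is `|Aa|² + 2 Ba·Bb + c |b|²`.
If `B = M A`, completing the square bounds it below by `c |b|² - |MᵀB b|²`, which is nonnegative
once `c` exceeds the squared Frobenius norm of `MᵀB`. Conversely, for `c > 0`, testing the form at
`b = -c⁻¹ BᵀB a` shows `ker A ≤ ker B`.

The two kernel inclusions factor `Y = M₁ X` and `V = N U`. On `range X` the interpolant is forced
to be `M₁`; on its orthogonal complement we take `Nᵀ`. Then `M X = Y`, and `XᵀV = YᵀU` says
exactly that `M₁` and `Nᵀ` pair with `U` in the same way against `range X`, which gives `Mᵀ U = V`.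
-/

open Matrix Filter
open scoped InnerProductSpace

namespace LinearMap

theorem exists_comp_eq_of_ker_le {K V V' W : Type*} [DivisionRing K]
    [AddCommGroup V] [Module K V] [AddCommGroup V'] [Module K V'] [AddCommGroup W] [Module K W]
    (g : V →ₗ[K] V') (f : V →ₗ[K] W) (h : ker g ≤ ker f) :
    ∃ f' : V' →ₗ[K] W, f' ∘ₗ g = f := by
  obtain ⟨f', hf'⟩ :=
    exists_extend ((ker g).liftQ f h ∘ₗ g.quotKerEquivRange.symm.toLinearMap)
  refine ⟨f', ext fun v => ?_⟩
  simpa [quotKerEquivRange_symm_apply_image] using congr($hf' ⟨g v, mem_range_self g v⟩)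

theorem exists_comp_eq_and_adjoint_comp_eq {𝕜 E F E₁ E₂ : Type*} [RCLike 𝕜]
    [NormedAddCommGroup E] [InnerProductSpace 𝕜 E] [FiniteDimensional 𝕜 E]
    [NormedAddCommGroup F] [InnerProductSpace 𝕜 F] [FiniteDimensional 𝕜 F]
    [AddCommGroup E₁] [Module 𝕜 E₁] [AddCommGroup E₂] [Module 𝕜 E₂]
    (X : E₁ →ₗ[𝕜] E) (Y : E₁ →ₗ[𝕜] F) (U : E₂ →ₗ[𝕜] F) (V : E₂ →ₗ[𝕜] E)
    (hXY : ker X ≤ ker Y) (hUV : ker U ≤ ker V) (hYU : ∀ a u, ⟪Y a, U u⟫_𝕜 = ⟪X a, V u⟫_𝕜) :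
    ∃ M : E →ₗ[𝕜] F, M ∘ₗ X = Y ∧ M.adjoint ∘ₗ U = V := by
  obtain ⟨M₁, hM₁⟩ := X.exists_comp_eq_of_ker_le Y hXY
  obtain ⟨N, hN⟩ := U.exists_comp_eq_of_ker_le V hUV
  let P : E →ₗ[𝕜] E := (range X).starProjection
  have hPX (a : E₁) : P (X a) = X a :=
    (range X).starProjection_eq_self_iff.2 (mem_range_self X a)
  set M := M₁ ∘ₗ P + N.adjoint ∘ₗ (id - P)
  refine ⟨M, ?_, ?_⟩
  · ext a
    simp [M, hPX, ← hM₁]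
  · ext u
    refine ext_inner_left 𝕜 fun w => ?_
    obtain ⟨a, ha⟩ := (range X).starProjection_apply_mem w
    have hPw : P w = X a := ha.symm
    calc ⟪w, M.adjoint (U u)⟫_𝕜
        = ⟪M₁ (P w), U u⟫_𝕜 + ⟪N.adjoint (w - P w), U u⟫_𝕜 := by
          rw [adjoint_inner_right]
          exact inner_add_left _ _ _
      _ = ⟪P w, V u⟫_𝕜 + ⟪w - P w, V u⟫_𝕜 := by
          rw [adjoint_inner_left, hPw, ← hYU, ← hM₁, ← hN]
          rfl
      _ = ⟪w, V u⟫_𝕜 := by rw [← inner_add_left, add_sub_cancel]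

end LinearMap

namespace Matrix

section EuclideanLin

variable {l m n : Type*} [Fintype l] [Fintype m] [Fintype n] [DecidableEq l] [DecidableEq m]
  [DecidableEq n]

theorem toEuclideanLin_transpose_s4 (A : Matrix m n ℝ) :
    toEuclideanLin Aᵀ = (toEuclideanLin A).adjoint := by
  rw [← conjTranspose_eq_transpose_of_trivial, toEuclideanLin_conjTranspose_eq_adjoint]

theorem inner_toEuclideanLin_toEuclideanLin (A : Matrix l m ℝ) (B : Matrix l n ℝ)
    (x : EuclideanSpace ℝ m) (y : EuclideanSpace ℝ n) :
    ⟪toEuclideanLin A x, toEuclideanLin B y⟫_ℝ = ⟪x, toEuclideanLin (Aᵀ * B) y⟫_ℝ := by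
  rw [toLpLin_mul_same, toEuclideanLin_transpose_s4, LinearMap.comp_apply,
    LinearMap.adjoint_inner_right]

end EuclideanLin

section BlockGram

variable {p q r : Type*} [Fintype p] [Fintype q] [Fintype r]

theorem dotProduct_transpose_mul_mulVec {R : Type*} [CommSemiring R] (A : Matrix p q R)
    (B : Matrix p r R) (a : q → R) (b : r → R) :
    a ⬝ᵥ (Aᵀ * B) *ᵥ b = (A *ᵥ a) ⬝ᵥ (B *ᵥ b) := by
  rw [← mulVec_mulVec, dotProduct_mulVec, vecMul_transpose]

section OrderedRing

variable {R : Type*} [CommRing R] [LinearOrder R] [IsStrictOrderedRing R]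

theorem dotProduct_self_nonneg (v : q → R) : 0 ≤ v ⬝ᵥ v :=
  Finset.sum_nonneg fun i _ => mul_self_nonneg (v i)

theorem dotProduct_mulVec_self_le (N : Matrix p q R) (b : q → R) :
    (N *ᵥ b) ⬝ᵥ (N *ᵥ b) ≤ (∑ i, ∑ j, N i j ^ 2) * (b ⬝ᵥ b) := by
  simp only [dotProduct, mulVec, ← sq]
  rw [Finset.sum_mul]
  gcongr with i
  exact Finset.sum_mul_sq_le_sq_mul_sq _ _ _

end OrderedRing

variable [DecidableEq q]

theorem sumElim_dotProduct_fromBlocks_mulVec_sumElim (A : Matrix p q ℝ) (B : Matrix r q ℝ)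
    (c : ℝ) (a b : q → ℝ) :
    (a ⊕ᵥ b) ⬝ᵥ fromBlocks (Aᵀ * A) (Bᵀ * B) (Bᵀ * B) (c • 1) *ᵥ (a ⊕ᵥ b) =
      (A *ᵥ a) ⬝ᵥ (A *ᵥ a) + 2 * ((B *ᵥ a) ⬝ᵥ (B *ᵥ b)) + c * (b ⬝ᵥ b) := by
  simp only [fromBlocks_mulVec, sumElim_dotProduct_sumElim, dotProduct_add,
    dotProduct_transpose_mul_mulVec, smul_mulVec, one_mulVec, dotProduct_smul, smul_eq_mul,
    dotProduct_comm (B *ᵥ b), Sum.elim_comp_inl, Sum.elim_comp_inr]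
  ring

theorem posSemidef_fromBlocks_iff (A : Matrix p q ℝ) (B : Matrix r q ℝ) (c : ℝ) :
    (fromBlocks (Aᵀ * A) (Bᵀ * B) (Bᵀ * B) (c • 1)).PosSemidef ↔
      ∀ a b : q → ℝ, 0 ≤ (A *ᵥ a) ⬝ᵥ (A *ᵥ a) + 2 * ((B *ᵥ a) ⬝ᵥ (B *ᵥ b)) + c * (b ⬝ᵥ b) := by
  have hAA : (Aᵀ * A).IsHermitian := by simpa using isHermitian_conjTranspose_mul_self A
  have hBB : (Bᵀ * B).IsHermitian := by simpa using isHermitian_conjTranspose_mul_self B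
  have hH : (fromBlocks (Aᵀ * A) (Bᵀ * B) (Bᵀ * B) (c • 1)).IsHermitian :=
    .fromBlocks hAA hBB.eq (by simp)
  simp only [posSemidef_iff_dotProduct_mulVec, hH, true_and, star_trivial,
    ← sumElim_dotProduct_fromBlocks_mulVec_sumElim]
  exact ⟨fun h a b => h _, fun h x => by simpa using h (x ∘ Sum.inl) (x ∘ Sum.inr)⟩

theorem mulVec_eq_zero_of_posSemidef_fromBlocks {A : Matrix p q ℝ} {B : Matrix r q ℝ} {c : ℝ}
    (hc : 0 < c) (h : (fromBlocks (Aᵀ * A) (Bᵀ * B) (Bᵀ * B) (c • 1)).PosSemidef)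
    {a : q → ℝ} (ha : A *ᵥ a = 0) : B *ᵥ a = 0 := by
  set w := Bᵀ *ᵥ (B *ᵥ a)
  have hBw : (B *ᵥ a) ⬝ᵥ (B *ᵥ w) = w ⬝ᵥ w := by rw [dotProduct_mulVec, ← mulVec_transpose]
  have hform := (posSemidef_fromBlocks_iff A B c).1 h a (-c⁻¹ • w)
  simp only [ha, dotProduct_zero, mulVec_smul, dotProduct_smul, smul_dotProduct, hBw,
    smul_eq_mul] at hform
  rw [show c * (-c⁻¹ * (-c⁻¹ * (w ⬝ᵥ w))) = c⁻¹ * (w ⬝ᵥ w) by field_simp] at hform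
  have hw : w ⬝ᵥ w = 0 := by
    refine le_antisymm (nonpos_of_mul_nonpos_right ?_ (inv_pos.2 hc)) (dotProduct_self_nonneg w)
    linarith
  have hBa : (B *ᵥ a) ⬝ᵥ (B *ᵥ a) = w ⬝ᵥ a := by rw [dotProduct_mulVec, ← mulVec_transpose]
  rwa [dotProduct_self_eq_zero.1 hw, zero_dotProduct, dotProduct_self_eq_zero] at hBa

theorem ker_toEuclideanLin_le_of_posSemidef_fromBlocks {A : Matrix p q ℝ} {B : Matrix r q ℝ}
    {c : ℝ} (hc : 0 < c) (h : (fromBlocks (Aᵀ * A) (Bᵀ * B) (Bᵀ * B) (c • 1)).PosSemidef) :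
    LinearMap.ker (toEuclideanLin A) ≤ LinearMap.ker (toEuclideanLin B) := fun x hx => by
  simp only [LinearMap.mem_ker, toLpLin_apply, WithLp.toLp_eq_zero] at hx ⊢
  exact mulVec_eq_zero_of_posSemidef_fromBlocks hc h hx

theorem eventually_posSemidef_fromBlocks_mul (A : Matrix p q ℝ) (M : Matrix r p ℝ) :
    ∀ᶠ c : ℝ in atTop,
      (fromBlocks (Aᵀ * A) ((M * A)ᵀ * (M * A)) ((M * A)ᵀ * (M * A)) (c • 1)).PosSemidef := by
  set N := Mᵀ * (M * A)
  filter_upwards [eventually_ge_atTop (∑ i, ∑ j, N i j ^ 2)] with c hc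
  refine (posSemidef_fromBlocks_iff A (M * A) c).2 fun a b => ?_
  set u := A *ᵥ a
  set v := N *ᵥ b
  have hcross : ((M * A) *ᵥ a) ⬝ᵥ ((M * A) *ᵥ b) = u ⬝ᵥ v := by
    rw [← mulVec_mulVec, ← dotProduct_transpose_mul_mulVec]
  have hsquare : (u + v) ⬝ᵥ (u + v) = u ⬝ᵥ u + 2 * (u ⬝ᵥ v) + v ⬝ᵥ v := by
    simp only [add_dotProduct, dotProduct_add, dotProduct_comm v u]
    ring
  have hv : v ⬝ᵥ v ≤ c * (b ⬝ᵥ b) := (dotProduct_mulVec_self_le N b).trans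
    (mul_le_mul_of_nonneg_right hc (dotProduct_self_nonneg b))
  linarith [dotProduct_self_nonneg (u + v)]

end BlockGram

end Matrix

/-- `L`-interpolation conditions with unbounded singular values (Theorem 3.6):
there exists a matrix `M` with `Y = M·X` and `V = Mᵀ·U` if and only if there exists
`L > 0` such that `XᵀV = YᵀU` and the two block matrices
`[[XᵀX, YᵀY],[YᵀY, L²I]]` and `[[UᵀU, VᵀV],[VᵀV, L²I]]` are positive semidefinite. -/
theorem linear_operator_interpolation_unbounded
    (n m N₁ N₂ : ℕ)
    (X : Matrix (Fin n) (Fin N₁) ℝ) (Y : Matrix (Fin m) (Fin N₁) ℝ)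
    (U : Matrix (Fin m) (Fin N₂) ℝ) (V : Matrix (Fin n) (Fin N₂) ℝ) :
    (∃ M : Matrix (Fin m) (Fin n) ℝ, Y = M * X ∧ V = Mᵀ * U) ↔
      (∃ L : ℝ, 0 < L ∧
        Xᵀ * V = Yᵀ * U ∧
        (Matrix.fromBlocks (Xᵀ * X) (Yᵀ * Y) (Yᵀ * Y)
          (L ^ 2 • (1 : Matrix (Fin N₁) (Fin N₁) ℝ))).PosSemidef ∧
        (Matrix.fromBlocks (Uᵀ * U) (Vᵀ * V) (Vᵀ * V)
          (L ^ 2 • (1 : Matrix (Fin N₂) (Fin N₂) ℝ))).PosSemidef) := by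
  constructor
  · rintro ⟨M, rfl, rfl⟩
    obtain ⟨L, ⟨hX, hU⟩, hL⟩ := ((tendsto_pow_atTop two_ne_zero).eventually
      ((eventually_posSemidef_fromBlocks_mul X M).and
        (eventually_posSemidef_fromBlocks_mul U Mᵀ)) |>.and (eventually_gt_atTop 0)).exists
    exact ⟨L, hL, by rw [transpose_mul, Matrix.mul_assoc], hX, hU⟩
  · rintro ⟨L, hL, hXV, hXY, hUV⟩
    obtain ⟨M, hMX, hMU⟩ := LinearMap.exists_comp_eq_and_adjoint_comp_eq
      (toEuclideanLin X) (toEuclideanLin Y) (toEuclideanLin U) (toEuclideanLin V)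
      (ker_toEuclideanLin_le_of_posSemidef_fromBlocks (pow_pos hL 2) hXY)
      (ker_toEuclideanLin_le_of_posSemidef_fromBlocks (pow_pos hL 2) hUV)
      fun a u => by rw [inner_toEuclideanLin_toEuclideanLin, ← hXV,
        ← inner_toEuclideanLin_toEuclideanLin]
    refine ⟨toEuclideanLin.symm M, toEuclideanLin.injective ?_, toEuclideanLin.injective ?_⟩
    · rw [toLpLin_mul_same, LinearEquiv.apply_symm_apply, hMX]
    · rw [toLpLin_mul_same, toEuclideanLin_transpose_s4, LinearEquiv.apply_symm_apply, hMU]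
end

section
/- Let 0 ≤ μ < L, let x₁,…,x_N and g₁,…,g_N be vectors in ℝ^d and f₁,…,f_N real numbers, and let X = (x₁ ⋯ x_N), G = (g₁ ⋯ g_N) be the corresponding d×N matrices. If Xᵀ·G = Gᵀ·X, (G − μ·X)ᵀ·(L·X − G) ⪰ 0, and f_i = (1/2)·x_iᵀ·g_i for all i, then for all pairs (i, j) ∈ {1,…,N}×{1,…,N} the smooth strongly convex interpolation inequality holds: 2·(1 − μ/L)·(f_i − f_j − g_jᵀ·(x_i − x_j)) ≥ (1/L)·‖g_i − g_j‖² + μ·‖x_i − x_j‖² − (2μ/L)·(g_i − g_j)ᵀ·(x_i − x_j). -/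
/-!
Testing the positive semidefinite matrix `(G - μX)ᵀ(LX - G)` against `eᵢ - eⱼ` gives
`0 ≤ ⟪gᵢ - gⱼ - μ(xᵢ - xⱼ), L(xᵢ - xⱼ) - (gᵢ - gⱼ)⟫`. Symmetry of `XᵀG` means the data come from a
quadratic, so `fᵢ - fⱼ - ⟪gⱼ, xᵢ - xⱼ⟫ = ½⟪gᵢ - gⱼ, xᵢ - xⱼ⟫`, and the interpolation inequality is
then exactly the first inequality divided by `L`.
-/

open Matrix

section ColumnMatrix

variable {m n : Type*}

theorem Matrix.of_columns_mulVec_single_sub_single [Fintype n] [DecidableEq n] (v : n → m → ℝ)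
    (i j : n) : (of fun r c => v c r) *ᵥ (Pi.single i 1 - Pi.single j 1) = v i - v j := by
  rw [mulVec_sub, mulVec_single_one, mulVec_single_one]
  rfl

theorem Matrix.of_columns_transpose_mul_apply [Fintype m] (x g : n → m → ℝ) (i j : n) :
    ((of fun r c => x c r)ᵀ * (of fun r c => g c r)) i j = x i ⬝ᵥ g j :=
  mul_apply'

end ColumnMatrix

theorem Matrix.PosSemidef.dotProduct_mulVec_of_transpose_mul {m n : Type*} [Fintype m] [Fintype n]
    {A B : Matrix m n ℝ} (h : (Aᵀ * B).PosSemidef) (v : n → ℝ) :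
    0 ≤ (A *ᵥ v) ⬝ᵥ (B *ᵥ v) := by
  simpa only [star_trivial, ← mulVec_mulVec, dotProduct_mulVec, vecMul_transpose]
    using h.dotProduct_mulVec_nonneg v

section Interpolation

variable {n : Type*} [Fintype n]

theorem half_dotProduct_sub_linearization_eq {x y gx gy : n → ℝ} (hsym : x ⬝ᵥ gy = y ⬝ᵥ gx) :
    1 / 2 * (x ⬝ᵥ gx) - 1 / 2 * (y ⬝ᵥ gy) - gy ⬝ᵥ (x - y) = 1 / 2 * ((gx - gy) ⬝ᵥ (x - y)) := by
  simp only [dotProduct_sub, sub_dotProduct, dotProduct_comm gx, dotProduct_comm gy]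
  linarith

theorem interpolation_bound_of_dotProduct_nonneg {μ L : ℝ} (hL : 0 < L) {u w : n → ℝ}
    (h : 0 ≤ (w - μ • u) ⬝ᵥ (L • u - w)) :
    1 / L * (w ⬝ᵥ w) + μ * (u ⬝ᵥ u) - 2 * μ / L * (w ⬝ᵥ u) ≤ (1 - μ / L) * (w ⬝ᵥ u) := by
  have hexpand : (w - μ • u) ⬝ᵥ (L • u - w) =
      L * (w ⬝ᵥ u) - w ⬝ᵥ w - μ * L * (u ⬝ᵥ u) + μ * (w ⬝ᵥ u) := by
    simp only [sub_dotProduct, dotProduct_sub, smul_dotProduct, dotProduct_smul, smul_eq_mul,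
      dotProduct_comm u w]
    ring
  have hgap : (1 - μ / L) * (w ⬝ᵥ u) - (1 / L * (w ⬝ᵥ w) + μ * (u ⬝ᵥ u) - 2 * μ / L * (w ⬝ᵥ u)) =
      1 / L * ((w - μ • u) ⬝ᵥ (L • u - w)) := by
    rw [hexpand]
    field_simp
    ring
  rw [← sub_nonneg, hgap]
  exact mul_nonneg (one_div_pos.mpr hL).le h

end Interpolation

/-- Lemma 3.8: the quadratic interpolation conditions imply the smooth strongly convex
interpolation inequalities. Squared Euclidean norms are written as dot products. -/
theorem quadratic_implies_smooth_strongly_convex_interpolation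
    (d N : ℕ) (μ L : ℝ) (hμ : 0 ≤ μ) (hμL : μ < L)
    (x g : Fin N → (Fin d → ℝ)) (f : Fin N → ℝ)
    (X G : Matrix (Fin d) (Fin N) ℝ)
    (hX : X = Matrix.of fun i j => x j i)
    (hG : G = Matrix.of fun i j => g j i)
    (hsym : Xᵀ * G = Gᵀ * X)
    (hpsd : ((G - μ • X)ᵀ * (L • X - G)).PosSemidef)
    (hf : ∀ i : Fin N, f i = (1 / 2) * (x i ⬝ᵥ g i)) :
    ∀ i j : Fin N,
      2 * (1 - μ / L) * (f i - f j - g j ⬝ᵥ (x i - x j)) ≥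
        (1 / L) * ((g i - g j) ⬝ᵥ (g i - g j)) +
        μ * ((x i - x j) ⬝ᵥ (x i - x j)) -
        (2 * μ / L) * ((g i - g j) ⬝ᵥ (x i - x j)) := by
  intro i j
  subst hX hG
  have hsym_ij : x i ⬝ᵥ g j = x j ⬝ᵥ g i := by
    have hentry := congrFun (congrFun hsym i) j
    rw [of_columns_transpose_mul_apply, of_columns_transpose_mul_apply] at hentry
    rw [hentry, dotProduct_comm]
  have hquad := hpsd.dotProduct_mulVec_of_transpose_mul (Pi.single i 1 - Pi.single j 1)
  simp only [sub_mulVec, smul_mulVec, of_columns_mulVec_single_sub_single] at hquad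
  rw [hf, hf, half_dotProduct_sub_linearization_eq hsym_ij]
  linarith [interpolation_bound_of_dotProduct_nonneg (hμ.trans_lt hμL) hquad]
end

section
/- Let X be a real n×N₁ matrix, Y a real m×N₁ matrix, U a real m×N₂ matrix, V a real n×N₂ matrix, and L ≥ 0. Suppose Xᵀ·V = Yᵀ·U, Yᵀ·Y ⪯ L²·Xᵀ·X, and Vᵀ·V ⪯ L²·Uᵀ·U. Then there exist natural numbers n_R, m_R and matrices X_R (n_R×N₁), Y_R (m_R×N₁), U_R (m_R×N₂), V_R (n_R×N₂) such that: (i) the Gram matrices agree, i.e., [X V]ᵀ·[X V] = [X_R V_R]ᵀ·[X_R V_R] and [Y U]ᵀ·[Y U] = [Y_R U_R]ᵀ·[Y_R U_R], where [A B] denotes horizontal concatenation; and (ii) there exists a real m_R×n_R matrix M_R with σ_max(M_R) ≤ L such that Y_R = M_R·X_R and V_R = M_Rᵀ·U_R. -/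
open Matrix

/-!
Both interpolation problems are merged into one on `ℝⁿ ⊕ ℝᵐ`: for `W = [[X, 0], [0, U]]` and
`Z = [[0, V], [Y, 0]]` the hypotheses say exactly that `WᵀZ` is symmetric and
`ZᵀZ ⪯ L² WᵀW`. Such data is interpolated by a symmetric `T` with `T² ⪯ L²`: with
`b = Z + L W` and a symmetric reflexive generalized inverse `H` of `bᵀW`, take
`T = b H bᵀ - L`. Then `T W = Z` because `ker (bᵀW) ⊆ ker b`, and
`L² - T² = (b H) (L² WᵀW - ZᵀZ) (b H)ᵀ` since `2L bᵀW = bᵀb + (L² WᵀW - ZᵀZ)`.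
The zero-padded matrices `[X; 0]`, `[0; Y]`, `[0; U]`, `[V; 0]` have the Gram matrices of
`X, Y, U, V`, and `T` maps them to one another.
-/

namespace Matrix

theorem fromCols_submatrix_id {ι ι' κ κ' R : Type*} (A : Matrix ι κ R) (B : Matrix ι κ' R)
    (e : ι' → ι) : fromCols (A.submatrix e id) (B.submatrix e id) = (fromCols A B).submatrix e id :=
  rfl

variable {ι κ : Type*} [Fintype ι] [Fintype κ]

theorem PosSemidef.fromBlocks_zero_zero {A : Matrix ι ι ℝ} {D : Matrix κ κ ℝ}
    (hA : A.PosSemidef) (hD : D.PosSemidef) : (fromBlocks A 0 0 D).PosSemidef := by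
  classical
  convert (hA.conjTranspose_mul_mul_same (fromCols (1 : Matrix ι ι ℝ) (0 : Matrix ι κ ℝ))).add
    (hD.conjTranspose_mul_mul_same (fromCols (0 : Matrix κ ι ℝ) (1 : Matrix κ κ ℝ))) using 1
  ext (i | i) (j | j) <;> simp [transpose_fromCols, fromRows_mul]

theorem IsHermitian.exists_reflexive_generalized_inverse {G : Matrix κ κ ℝ} (hG : G.IsHermitian) :
    ∃ H : Matrix κ κ ℝ, Hᵀ = H ∧ G * H * G = G ∧ H * G * H = H := by
  classical
  have hcont (f : ℝ → ℝ) : ContinuousOn f (spectrum ℝ G) := G.finite_real_spectrum.continuousOn f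
  have cfc_mul₃ (f g h : ℝ → ℝ) :
      cfc f G * cfc g G * cfc h G = cfc (fun x ↦ f x * g x * h x) G := by
    rw [cfc_mul _ _ _ (hcont _) (hcont _), cfc_mul _ _ _ (hcont _) (hcont _)]
  have cfc_id_eq : cfc id G = G := cfc_id ℝ G hG.isSelfAdjoint
  -- With the convention `0⁻¹ = 0`, `cfc (·⁻¹) G` is the Moore–Penrose inverse of `G`.
  refine ⟨cfc (·⁻¹ : ℝ → ℝ) G, IsSymm.eq (cfc_predicate _ G : IsSelfAdjoint _), ?_, ?_⟩
  · calc G * cfc (·⁻¹) G * G = cfc id G * cfc (·⁻¹) G * cfc id G := by rw [cfc_id_eq]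
      _ = cfc (fun x ↦ x * x⁻¹ * x) G := cfc_mul₃ _ _ _
      _ = G := by simp only [mul_inv_mul_cancel, cfc_id' ℝ G hG.isSelfAdjoint]
  · calc cfc (·⁻¹ : ℝ → ℝ) G * G * cfc (·⁻¹) G = cfc (·⁻¹) G * cfc id G * cfc (·⁻¹) G := by
          rw [cfc_id_eq]
      _ = cfc (fun x ↦ x⁻¹ * x * x⁻¹) G := cfc_mul₃ _ _ _
      _ = cfc (·⁻¹) G := by congr! 2 with x; simpa using mul_inv_mul_cancel x⁻¹

open scoped MatrixOrder in
theorem mul_eq_zero_of_posSemidef_sub {ν : Type*} [Fintype ν] {b : Matrix ι κ ℝ}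
    {K : Matrix κ κ ℝ} {F : Matrix κ ν ℝ} (h : (K - bᵀ * b).PosSemidef) (hF : K * F = 0) :
    b * F = 0 := by
  have hneg : (-((b * F)ᵀ * (b * F))).PosSemidef := by
    convert h.conjTranspose_mul_mul_same F using 1
    simp [Matrix.mul_sub, Matrix.sub_mul, Matrix.mul_assoc, hF]
  have hzero : (b * F)ᵀ * (b * F) = 0 :=
    le_antisymm (by simpa [le_iff] using hneg)
      (by simpa [le_iff] using posSemidef_conjTranspose_mul_self (b * F))
  simpa using (conjTranspose_mul_self_eq_zero (A := b * F)).mp (by simpa using hzero)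

theorem exists_symmetric_interpolant [DecidableEq ι] (L : ℝ) {W Z : Matrix ι κ ℝ}
    (hWZ : (Wᵀ * Z)ᵀ = Wᵀ * Z) (hD : (L ^ 2 • (Wᵀ * W) - Zᵀ * Z).PosSemidef) :
    ∃ T : Matrix ι ι ℝ, Tᵀ = T ∧ T * W = Z ∧ (L ^ 2 • 1 - T * T).PosSemidef := by
  classical
  set D := L ^ 2 • (Wᵀ * W) - Zᵀ * Z
  set b := Z + L • W
  have hZW : Zᵀ * W = Wᵀ * Z := by rw [← hWZ, transpose_mul, transpose_transpose]
  have hG : (bᵀ * W).IsHermitian := by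
    rw [IsHermitian, conjTranspose_eq_transpose_of_trivial]
    simp [b, transpose_add, Matrix.add_mul, hZW]
  have hGD : (2 * L) • (bᵀ * W) - bᵀ * b = D := by
    simp only [b, D, transpose_add, transpose_smul, Matrix.add_mul, Matrix.mul_add,
      Matrix.smul_mul, Matrix.mul_smul, hZW]
    module
  obtain ⟨H, hH, hGHG, hHGH⟩ := hG.exists_reflexive_generalized_inverse
  set G := bᵀ * W
  have hbHG : b * H * G = b := by
    have h : b * (1 - H * G) = 0 := by
      refine mul_eq_zero_of_posSemidef_sub (K := (2 * L) • G) (by rwa [hGD]) ?_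
      rw [Matrix.smul_mul, Matrix.mul_sub, Matrix.mul_one, ← Matrix.mul_assoc, hGHG, sub_self,
        smul_zero]
    rwa [Matrix.mul_sub, Matrix.mul_one, sub_eq_zero, eq_comm, ← Matrix.mul_assoc] at h
  set S := b * H * bᵀ
  have hS : (2 * L) • S - S * S = b * H * D * (b * H)ᵀ := by
    rw [← hGD, transpose_mul, hH]
    simp only [S, Matrix.mul_sub, Matrix.sub_mul, Matrix.mul_smul, Matrix.smul_mul,
      Matrix.mul_assoc]
    congr 2
    simp only [← Matrix.mul_assoc, hHGH]
  refine ⟨S - L • 1, ?_, ?_, ?_⟩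
  · simp [S, transpose_sub, transpose_mul, hH, Matrix.mul_assoc]
  · have hSW : S * W = b := by rw [← hbHG]; simp only [S, G, Matrix.mul_assoc]
    simp [Matrix.sub_mul, hSW, b]
  · have hsq : L ^ 2 • (1 : Matrix ι ι ℝ) - (S - L • 1) * (S - L • 1) = (2 * L) • S - S * S := by
      simp only [Matrix.sub_mul, Matrix.mul_sub, Matrix.smul_mul, Matrix.mul_smul, Matrix.one_mul,
        Matrix.mul_one]
      module
    rw [hsq, hS]
    simpa using hD.mul_mul_conjTranspose_same (b * H)

theorem exists_symmetric_dilation {ι₁ ι₂ κ₁ κ₂ : Type*} [Fintype ι₁] [Fintype ι₂] [Fintype κ₁]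
    [Fintype κ₂] [DecidableEq ι₁] [DecidableEq ι₂] (L : ℝ)
    {X : Matrix ι₁ κ₁ ℝ} {Y : Matrix ι₂ κ₁ ℝ} {U : Matrix ι₂ κ₂ ℝ} {V : Matrix ι₁ κ₂ ℝ}
    (h1 : Xᵀ * V = Yᵀ * U)
    (h2 : (L ^ 2 • (Xᵀ * X) - Yᵀ * Y).PosSemidef)
    (h3 : (L ^ 2 • (Uᵀ * U) - Vᵀ * V).PosSemidef) :
    ∃ T : Matrix (ι₁ ⊕ ι₂) (ι₁ ⊕ ι₂) ℝ, Tᵀ = T ∧ T * fromRows X 0 = fromRows 0 Y ∧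
      T * fromRows 0 U = fromRows V 0 ∧ (L ^ 2 • 1 - T * T).PosSemidef := by
  obtain ⟨T, hT, hTW, hTL⟩ := exists_symmetric_interpolant L
    (W := fromBlocks X 0 0 U) (Z := fromBlocks 0 V Y 0)
    (by simp [fromBlocks_transpose, fromBlocks_multiply, h1])
    (by simpa [fromBlocks_transpose, fromBlocks_multiply, fromBlocks_smul, sub_eq_add_neg,
      fromBlocks_neg, fromBlocks_add] using h2.fromBlocks_zero_zero h3)
  rw [← fromCols_fromRows_eq_fromBlocks, ← fromCols_fromRows_eq_fromBlocks, mul_fromCols,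
    fromCols_inj.eq_iff] at hTW
  exact ⟨T, hT, hTW.1, hTW.2, hTL⟩

end Matrix

theorem exists_interpolable_with_same_gram_general
    (n m N₁ N₂ : ℕ) (L : ℝ)
    (X : Matrix (Fin n) (Fin N₁) ℝ) (Y : Matrix (Fin m) (Fin N₁) ℝ)
    (U : Matrix (Fin m) (Fin N₂) ℝ) (V : Matrix (Fin n) (Fin N₂) ℝ)
    (h1 : Xᵀ * V = Yᵀ * U)
    (h2 : (L ^ 2 • (Xᵀ * X) - Yᵀ * Y).PosSemidef)
    (h3 : (L ^ 2 • (Uᵀ * U) - Vᵀ * V).PosSemidef) :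
    ∃ (nR mR : ℕ) (XR : Matrix (Fin nR) (Fin N₁) ℝ) (YR : Matrix (Fin mR) (Fin N₁) ℝ)
      (UR : Matrix (Fin mR) (Fin N₂) ℝ) (VR : Matrix (Fin nR) (Fin N₂) ℝ),
      (Matrix.fromCols X V)ᵀ * Matrix.fromCols X V =
        (Matrix.fromCols XR VR)ᵀ * Matrix.fromCols XR VR ∧
      (Matrix.fromCols Y U)ᵀ * Matrix.fromCols Y U =
        (Matrix.fromCols YR UR)ᵀ * Matrix.fromCols YR UR ∧
      ∃ MR : Matrix (Fin mR) (Fin nR) ℝ,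
        (L ^ 2 • (1 : Matrix (Fin nR) (Fin nR) ℝ) - MRᵀ * MR).PosSemidef ∧
        YR = MR * XR ∧ VR = MRᵀ * UR := by
  obtain ⟨T, hT, hTX, hTU, hTL⟩ := exists_symmetric_dilation L h1 h2 h3
  let e : Fin (n + m) ≃ Fin n ⊕ Fin m := finSumFinEquiv.symm
  refine ⟨n + m, n + m, (fromRows X 0).submatrix e id, (fromRows 0 Y).submatrix e id,
    (fromRows 0 U).submatrix e id, (fromRows V 0).submatrix e id, ?_, ?_, T.submatrix e e, ?_, ?_,
    ?_⟩
  · rw [fromCols_submatrix_id, transpose_submatrix, submatrix_mul_equiv]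
    simp [fromBlocks_transpose, fromBlocks_multiply, transpose_fromCols, fromRows_mul]
  · rw [fromCols_submatrix_id, transpose_submatrix, submatrix_mul_equiv]
    simp [fromBlocks_transpose, fromBlocks_multiply, transpose_fromCols, fromRows_mul]
  · have hsub : L ^ 2 • (1 : Matrix (Fin (n + m)) (Fin (n + m)) ℝ) -
        (T.submatrix e e)ᵀ * T.submatrix e e = (L ^ 2 • 1 - T * T).submatrix e e := by
      simp [transpose_submatrix, hT, submatrix_sub, submatrix_smul]
    rw [hsub]
    exact hTL.submatrix e
  · rw [submatrix_mul_equiv]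
    exact congrArg (·.submatrix e id) hTX.symm
  · rw [transpose_submatrix, hT, submatrix_mul_equiv]
    exact congrArg (·.submatrix e id) hTU.symm

/-- Lemma 3.9 (Step 1): under the interpolation conditions, there is an interpolable
quadruple `(X_R, Y_R, U_R, V_R)` with the same Gram matrices as `(X, Y, U, V)`. -/
theorem exists_interpolable_with_same_gram
    (n m N₁ N₂ : ℕ) (L : ℝ) (hL : 0 ≤ L)
    (X : Matrix (Fin n) (Fin N₁) ℝ) (Y : Matrix (Fin m) (Fin N₁) ℝ)
    (U : Matrix (Fin m) (Fin N₂) ℝ) (V : Matrix (Fin n) (Fin N₂) ℝ)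
    (h1 : Xᵀ * V = Yᵀ * U)
    (h2 : (L ^ 2 • (Xᵀ * X) - Yᵀ * Y).PosSemidef)
    (h3 : (L ^ 2 • (Uᵀ * U) - Vᵀ * V).PosSemidef) :
    ∃ (nR mR : ℕ) (XR : Matrix (Fin nR) (Fin N₁) ℝ) (YR : Matrix (Fin mR) (Fin N₁) ℝ)
      (UR : Matrix (Fin mR) (Fin N₂) ℝ) (VR : Matrix (Fin nR) (Fin N₂) ℝ),
      (Matrix.fromCols X V)ᵀ * Matrix.fromCols X V =
        (Matrix.fromCols XR VR)ᵀ * Matrix.fromCols XR VR ∧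
      (Matrix.fromCols Y U)ᵀ * Matrix.fromCols Y U =
        (Matrix.fromCols YR UR)ᵀ * Matrix.fromCols YR UR ∧
      ∃ MR : Matrix (Fin mR) (Fin nR) ℝ,
        (L ^ 2 • (1 : Matrix (Fin nR) (Fin nR) ℝ) - MRᵀ * MR).PosSemidef ∧
        YR = MR * XR ∧ VR = MRᵀ * UR :=
  exists_interpolable_with_same_gram_general n m N₁ N₂ L X Y U V h1 h2 h3
end

section
/- Let L ≥ 0. Let X_R (n_R×N₁), Y_R (m_R×N₁), U_R (m_R×N₂), V_R (n_R×N₂) be real matrices for which there exists a real m_R×n_R matrix M_R with σ_max(M_R) ≤ L, Y_R = M_R·X_R and V_R = M_Rᵀ·U_R. Then for all real matrices X (n×N₁), Y (m×N₁), U (m×N₂), V (n×N₂) satisfying the Gram matrix equalities [X V]ᵀ·[X V] = [X_R V_R]ᵀ·[X_R V_R] and [Y U]ᵀ·[Y U] = [Y_R U_R]ᵀ·[Y_R U_R], there exists a real m×n matrix M with σ_max(M) ≤ L such that Y = M·X and V = Mᵀ·U. -/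
/-!
Equal Gram matrices `Aᴴ A = Bᴴ B` say that `B v ↦ A v` is a well-defined isometry between the
column spaces of `B` and `A`; it is realised by a partial isometry `Q` with `Q B = A` and
`Qᴴ A = B`. Taking such a `P` from `[X_R V_R]` to `[X V]` and a `Q` from `[Y_R U_R]` to `[Y U]`,
the matrix `M = Q M_R Pᴴ` satisfies `M X = Q M_R X_R = Q Y_R = Y` and `Mᴴ U = P M_Rᴴ U_R = V`,
and `‖M‖ ≤ ‖M_R‖ ≤ L` because `P` and `Q` are contractions.
-/

open Matrix
open scoped MatrixOrder ComplexOrder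

namespace Matrix

variable {𝕜 : Type*} [RCLike 𝕜] {k m n p : Type*} [Fintype k] [Fintype m]

lemma mul_mul_conjTranspose_le_mul_mul_conjTranspose {A B : Matrix k k 𝕜} (h : A ≤ B)
    (C : Matrix m k 𝕜) : C * A * Cᴴ ≤ C * B * Cᴴ := by
  rw [le_iff] at h ⊢
  simpa only [Matrix.mul_sub, Matrix.sub_mul] using h.mul_mul_conjTranspose_same C

variable [DecidableEq k]

/-- The Moore–Penrose pseudoinverse of a Hermitian matrix: invert its nonzero eigenvalues and
keep the zero ones (as `(0 : ℝ)⁻¹ = 0`). -/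
noncomputable def hermitianPinv (G : Matrix k k 𝕜) : Matrix k k 𝕜 := cfc (·⁻¹ : ℝ → ℝ) G

lemma isHermitian_hermitianPinv (G : Matrix k k 𝕜) : (hermitianPinv G).IsHermitian :=
  cfc_predicate _ G

lemma mul_hermitianPinv_mul_self {G : Matrix k k 𝕜} (hG : G.IsHermitian) :
    G * hermitianPinv G * G = G := by
  have hinv : ContinuousOn (·⁻¹ : ℝ → ℝ) (spectrum ℝ G) := G.finite_real_spectrum.continuousOn _
  calc G * hermitianPinv G * G = cfc (fun x : ℝ ↦ x * x⁻¹ * x) G := by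
        rw [cfc_mul .., cfc_mul .., cfc_id' ℝ G hG.isSelfAdjoint, hermitianPinv]
    _ = G := by simp only [mul_inv_mul_cancel, cfc_id' ℝ G hG.isSelfAdjoint]

lemma mul_hermitianPinv_gram_mul_gram (A : Matrix m k 𝕜) :
    A * hermitianPinv (Aᴴ * A) * (Aᴴ * A) = A := by
  set G := Aᴴ * A
  have hG : G * (1 - hermitianPinv G * G) = 0 := by
    rw [Matrix.mul_sub, Matrix.mul_one, ← Matrix.mul_assoc,
      mul_hermitianPinv_mul_self (isHermitian_conjTranspose_mul_self A), sub_self]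
  have hD : (A * (1 - hermitianPinv G * G))ᴴ * (A * (1 - hermitianPinv G * G)) = 0 := by
    rw [conjTranspose_mul, Matrix.mul_assoc, ← Matrix.mul_assoc Aᴴ, hG, Matrix.mul_zero]
  rw [conjTranspose_mul_self_eq_zero, Matrix.mul_sub, Matrix.mul_one, sub_eq_zero] at hD
  rw [Matrix.mul_assoc, ← hD]

lemma isStarProjection_mul_hermitianPinv_gram_mul_conjTranspose (A : Matrix m k 𝕜) :
    IsStarProjection (A * hermitianPinv (Aᴴ * A) * Aᴴ) where
  isIdempotentElem :=
    calc A * hermitianPinv (Aᴴ * A) * Aᴴ * (A * hermitianPinv (Aᴴ * A) * Aᴴ)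
        = A * hermitianPinv (Aᴴ * A) * (Aᴴ * A) * hermitianPinv (Aᴴ * A) * Aᴴ := by
          simp only [Matrix.mul_assoc]
      _ = A * hermitianPinv (Aᴴ * A) * Aᴴ := by rw [mul_hermitianPinv_gram_mul_gram]
  isSelfAdjoint := by
    simp only [IsSelfAdjoint, star_eq_conjTranspose, conjTranspose_mul,
      conjTranspose_conjTranspose, (isHermitian_hermitianPinv _).eq, Matrix.mul_assoc]

/-- The partial isometry is `Q = A G⁺ Bᴴ` with `G = Aᴴ A = Bᴴ B`; then `Qᴴ Q = B G⁺ Bᴴ` and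
`Q Qᴴ = A G⁺ Aᴴ` are the orthogonal projections onto the column spaces of `B` and `A`. -/
theorem exists_partialIsometry_of_gram_eq [DecidableEq m] [Fintype p] [DecidableEq p]
    (A : Matrix m k 𝕜) (B : Matrix p k 𝕜) (h : Aᴴ * A = Bᴴ * B) :
    ∃ Q : Matrix m p 𝕜, Q * B = A ∧ Qᴴ * A = B ∧ Qᴴ * Q ≤ 1 ∧ Q * Qᴴ ≤ 1 := by
  have hQ : (A * hermitianPinv (Aᴴ * A) * Bᴴ)ᴴ = B * hermitianPinv (Bᴴ * B) * Aᴴ := by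
    simp only [conjTranspose_mul, conjTranspose_conjTranspose, (isHermitian_hermitianPinv _).eq,
      Matrix.mul_assoc, h]
  have hQB : A * hermitianPinv (Aᴴ * A) * Bᴴ * B = A := by
    rw [Matrix.mul_assoc, ← h, mul_hermitianPinv_gram_mul_gram]
  have hQA : (A * hermitianPinv (Aᴴ * A) * Bᴴ)ᴴ * A = B := by
    rw [hQ, Matrix.mul_assoc, h, mul_hermitianPinv_gram_mul_gram]
  refine ⟨A * hermitianPinv (Aᴴ * A) * Bᴴ, hQB, hQA, ?_, ?_⟩
  · calc (A * hermitianPinv (Aᴴ * A) * Bᴴ)ᴴ * (A * hermitianPinv (Aᴴ * A) * Bᴴ)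
        = (A * hermitianPinv (Aᴴ * A) * Bᴴ)ᴴ * A * hermitianPinv (Aᴴ * A) * Bᴴ := by
          simp only [Matrix.mul_assoc]
      _ = B * hermitianPinv (Bᴴ * B) * Bᴴ := by rw [hQA, h]
      _ ≤ 1 := (isStarProjection_mul_hermitianPinv_gram_mul_conjTranspose B).le_one
  · calc A * hermitianPinv (Aᴴ * A) * Bᴴ * (A * hermitianPinv (Aᴴ * A) * Bᴴ)ᴴ
        = A * hermitianPinv (Aᴴ * A) * Aᴴ := by
          rw [hQ, ← h, ← Matrix.mul_assoc, ← Matrix.mul_assoc, hQB]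
      _ ≤ 1 := (isStarProjection_mul_hermitianPinv_gram_mul_conjTranspose A).le_one

theorem conjTranspose_mul_self_le_of_contractions [DecidableEq m] [Fintype n]
    [DecidableEq n] [Fintype p] {Q : Matrix p m 𝕜} {M : Matrix m k 𝕜} {P : Matrix n k 𝕜}
    {c : ℝ} (hc : 0 ≤ c) (hQ : Qᴴ * Q ≤ 1) (hM : Mᴴ * M ≤ c • 1) (hP : P * Pᴴ ≤ 1) :
    (Q * M * Pᴴ)ᴴ * (Q * M * Pᴴ) ≤ c • 1 :=
  calc (Q * M * Pᴴ)ᴴ * (Q * M * Pᴴ) = P * (Mᴴ * (Qᴴ * Q) * M) * Pᴴ := by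
        simp only [conjTranspose_mul, conjTranspose_conjTranspose, Matrix.mul_assoc]
    _ ≤ P * (Mᴴ * M) * Pᴴ := by
        refine mul_mul_conjTranspose_le_mul_mul_conjTranspose ?_ P
        simpa using mul_mul_conjTranspose_le_mul_mul_conjTranspose hQ Mᴴ
    _ ≤ P * (c • 1) * Pᴴ := mul_mul_conjTranspose_le_mul_mul_conjTranspose hM P
    _ = c • (P * Pᴴ) := by simp
    _ ≤ c • 1 := by
        rw [le_iff, ← smul_sub]
        exact (le_iff.mp hP).smul hc

end Matrix

theorem interpolable_of_same_gram_general
    (nR mR N₁ N₂ : ℕ) (L : ℝ)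
    (XR : Matrix (Fin nR) (Fin N₁) ℝ) (YR : Matrix (Fin mR) (Fin N₁) ℝ)
    (UR : Matrix (Fin mR) (Fin N₂) ℝ) (VR : Matrix (Fin nR) (Fin N₂) ℝ)
    (MR : Matrix (Fin mR) (Fin nR) ℝ)
    (hMR : (L ^ 2 • (1 : Matrix (Fin nR) (Fin nR) ℝ) - MRᵀ * MR).PosSemidef)
    (hYR : YR = MR * XR) (hVR : VR = MRᵀ * UR) :
    ∀ (n m : ℕ) (X : Matrix (Fin n) (Fin N₁) ℝ) (Y : Matrix (Fin m) (Fin N₁) ℝ)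
      (U : Matrix (Fin m) (Fin N₂) ℝ) (V : Matrix (Fin n) (Fin N₂) ℝ),
      (Matrix.fromCols X V)ᵀ * Matrix.fromCols X V =
        (Matrix.fromCols XR VR)ᵀ * Matrix.fromCols XR VR →
      (Matrix.fromCols Y U)ᵀ * Matrix.fromCols Y U =
        (Matrix.fromCols YR UR)ᵀ * Matrix.fromCols YR UR →
      ∃ M : Matrix (Fin m) (Fin n) ℝ,
        (L ^ 2 • (1 : Matrix (Fin n) (Fin n) ℝ) - Mᵀ * M).PosSemidef ∧
        Y = M * X ∧ V = Mᵀ * U := by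
  intro n m X Y U V hXV hYU
  simp only [← conjTranspose_eq_transpose_of_trivial] at hMR hVR hXV hYU ⊢
  obtain ⟨P, hPB, hPA, -, hPP⟩ := exists_partialIsometry_of_gram_eq _ _ hXV
  obtain ⟨Q, hQB, hQA, hQQ, -⟩ := exists_partialIsometry_of_gram_eq _ _ hYU
  rw [mul_fromCols, fromCols_ext_iff] at hPB hPA hQB hQA
  refine ⟨Q * MR * Pᴴ, conjTranspose_mul_self_le_of_contractions (sq_nonneg L) hQQ hMR hPP,
    ?_, ?_⟩
  · rw [← hQB.1, hYR, ← hPA.1, Matrix.mul_assoc, Matrix.mul_assoc]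
  · rw [← hPB.2, hVR, ← hQA.2]
    simp only [conjTranspose_mul, conjTranspose_conjTranspose, Matrix.mul_assoc]

/-- Lemma 3.11 (Step 2): interpolability is transferred to any quadruple having the
same Gram matrices. -/
theorem interpolable_of_same_gram
    (nR mR N₁ N₂ : ℕ) (L : ℝ) (hL : 0 ≤ L)
    (XR : Matrix (Fin nR) (Fin N₁) ℝ) (YR : Matrix (Fin mR) (Fin N₁) ℝ)
    (UR : Matrix (Fin mR) (Fin N₂) ℝ) (VR : Matrix (Fin nR) (Fin N₂) ℝ)
    (MR : Matrix (Fin mR) (Fin nR) ℝ)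
    (hMR : (L ^ 2 • (1 : Matrix (Fin nR) (Fin nR) ℝ) - MRᵀ * MR).PosSemidef)
    (hYR : YR = MR * XR) (hVR : VR = MRᵀ * UR) :
    ∀ (n m : ℕ) (X : Matrix (Fin n) (Fin N₁) ℝ) (Y : Matrix (Fin m) (Fin N₁) ℝ)
      (U : Matrix (Fin m) (Fin N₂) ℝ) (V : Matrix (Fin n) (Fin N₂) ℝ),
      (Matrix.fromCols X V)ᵀ * Matrix.fromCols X V =
        (Matrix.fromCols XR VR)ᵀ * Matrix.fromCols XR VR →
      (Matrix.fromCols Y U)ᵀ * Matrix.fromCols Y U =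
        (Matrix.fromCols YR UR)ᵀ * Matrix.fromCols YR UR →
      ∃ M : Matrix (Fin m) (Fin n) ℝ,
        (L ^ 2 • (1 : Matrix (Fin n) (Fin n) ℝ) - Mᵀ * M).PosSemidef ∧
        Y = M * X ∧ V = Mᵀ * U :=
  interpolable_of_same_gram_general nR mR N₁ N₂ L XR YR UR VR MR hMR hYR hVR
end

section
/- Let A and C be real symmetric positive semidefinite n×n matrices. Then there exists α > 0 with C ⪯ α·A if and only if A·A⁺·C = C, where A⁺ denotes the Moore–Penrose pseudoinverse of A. -/
/-!
`Q = A * P` is the orthogonal projection onto the range of `A`, and `R = 1 - Q` the one onto its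
kernel. If `C ⪯ α • A`, then `0 ⪯ R C R ⪯ α • R A R = 0`, so `C R = 0`, i.e. `Q C = C`.
Conversely `A + R` is positive definite (its kernel lies in `ker A ∩ range Q = 0`), so it dominates
`C` up to a scalar `α`, and compressing by `Q` gives `C = Q C Q ⪯ α • Q (A + R) Q = α • A`.
-/

open Matrix

/-- `P` is the Moore–Penrose pseudoinverse of `A` (characterized by the four Penrose
equations, which determine it uniquely). -/
def IsMoorePenroseInverse {n : ℕ} (A P : Matrix (Fin n) (Fin n) ℝ) : Prop :=
  A * P * A = A ∧ P * A * P = P ∧ (A * P)ᵀ = A * P ∧ (P * A)ᵀ = P * A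

open scoped MatrixOrder ComplexOrder

namespace Matrix

variable {m 𝕜 : Type*} [Fintype m] [DecidableEq m] [RCLike 𝕜]

lemma PosDef.exists_pos_algebraMap_le {B : Matrix m m 𝕜} (hB : B.PosDef) :
    ∃ r > 0, algebraMap ℝ (Matrix m m 𝕜) r ≤ B := by
  cases subsingleton_or_nontrivial (Matrix m m 𝕜)
  · exact ⟨1, one_pos, (Subsingleton.elim _ _).le⟩
  · exact (CFC.exists_pos_algebraMap_le_iff hB.isHermitian.isSelfAdjoint).mpr
      fun _ hx => hB.isStrictlyPositive.spectrum_pos hx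

lemma IsHermitian.exists_pos_le_algebraMap {C : Matrix m m 𝕜} (hC : C.IsHermitian) :
    ∃ c > 0, C ≤ algebraMap ℝ (Matrix m m 𝕜) c := by
  obtain ⟨c, hc⟩ := C.finite_real_spectrum.bddAbove
  exact ⟨max c 1, by positivity,
    le_algebraMap_of_spectrum_le (fun x hx => (hc hx).trans (le_max_left c 1)) hC.isSelfAdjoint⟩

lemma PosDef.exists_le_smul {B C : Matrix m m 𝕜} (hB : B.PosDef) (hC : C.IsHermitian) :
    ∃ α : ℝ, 0 < α ∧ C ≤ α • B := by
  obtain ⟨r, hr, hrB⟩ := hB.exists_pos_algebraMap_le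
  obtain ⟨c, hc, hCc⟩ := hC.exists_pos_le_algebraMap
  refine ⟨c / r, by positivity, ?_⟩
  calc C ≤ algebraMap ℝ _ c := hCc
    _ = (c / r) • algebraMap ℝ _ r := by
        rw [Algebra.algebraMap_eq_smul_one, Algebra.algebraMap_eq_smul_one, smul_smul,
          div_mul_cancel₀ c hr.ne']
    _ ≤ (c / r) • B := by
        rw [le_iff, ← smul_sub]; exact (le_iff.mp hrB).smul (by positivity)

lemma PosSemidef.mul_eq_zero_of_conjTranspose_mul_mul_eq_zero {C R : Matrix m m 𝕜}
    (hC : C.PosSemidef) (h : Rᴴ * C * R = 0) : C * R = 0 := by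
  obtain ⟨D, rfl⟩ := CStarAlgebra.nonneg_iff_eq_star_mul_self.mp hC.nonneg
  rw [star_eq_conjTranspose] at h ⊢
  rw [conjTranspose_mul_self_mul_eq_zero]
  rwa [← Matrix.mul_assoc, ← conjTranspose_mul, Matrix.mul_assoc,
    conjTranspose_mul_self_eq_zero] at h

end Matrix

namespace IsMoorePenroseInverse

variable {n : ℕ} {A C P : Matrix (Fin n) (Fin n) ℝ}

lemma isHermitian_mul (hP : IsMoorePenroseInverse A P) : (A * P).IsHermitian := by
  rw [IsHermitian, conjTranspose_eq_transpose_of_trivial]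
  exact hP.2.2.1

lemma self_mul_mul_eq (hP : IsMoorePenroseInverse A P) (hA : A.IsHermitian) : A * (A * P) = A := by
  simpa only [conjTranspose_mul, hA.eq, hP.isHermitian_mul.eq] using congrArg conjTranspose hP.1

lemma isIdempotentElem_mul (hP : IsMoorePenroseInverse A P) : IsIdempotentElem (A * P) := by
  rw [IsIdempotentElem, ← Matrix.mul_assoc, hP.1]

lemma mul_mul_add_one_sub (hP : IsMoorePenroseInverse A P) :
    A * P * (A + (1 - A * P)) = A := by
  rw [mul_add, mul_sub, Matrix.mul_one, hP.isIdempotentElem_mul.eq, hP.1, sub_self, add_zero]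

lemma posDef_add_one_sub (hP : IsMoorePenroseInverse A P) (hA : A.PosSemidef) :
    (A + (1 - A * P)).PosDef := by
  set Q := A * P
  have hR : (1 - Q)ᴴ * (1 - Q) = 1 - Q := by
    rw [conjTranspose_sub, conjTranspose_one, hP.isHermitian_mul.eq]
    exact hP.isIdempotentElem_mul.one_sub.eq
  have hpsd : (A + (1 - Q)).PosSemidef := hA.add (hR ▸ posSemidef_conjTranspose_mul_self _)
  refine hpsd.posDef_iff_isUnit.mpr (mulVec_injective_iff_isUnit.mp ?_)
  refine (injective_iff_map_eq_zero (A + (1 - Q)).mulVecLin).mpr fun v hv => ?_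
  rw [mulVecLin_apply] at hv
  have hAv : A *ᵥ v = 0 := by
    rw [← hP.mul_mul_add_one_sub, ← mulVec_mulVec, hv, mulVec_zero]
  have hQ : Pᴴ * A = Q := by
    rw [← hA.isHermitian.eq, ← conjTranspose_mul, hP.isHermitian_mul.eq]
  calc v = (A + (1 - Q)) *ᵥ v - A *ᵥ v + Pᴴ *ᵥ (A *ᵥ v) := by
        rw [mulVec_mulVec, hQ, ← sub_mulVec, ← add_mulVec, add_sub_cancel_left, sub_add_cancel,
          one_mulVec]
    _ = 0 := by rw [hv, hAv, mulVec_zero, sub_zero, add_zero]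

lemma mul_mul_eq_of_le_smul (hP : IsMoorePenroseInverse A P) (hA : A.IsHermitian)
    (hC : C.PosSemidef) {α : ℝ} (hCA : C ≤ α • A) : A * P * C = C := by
  set R := 1 - A * P
  have hAR : A * R = 0 := by rw [mul_sub, Matrix.mul_one, hP.self_mul_mul_eq hA, sub_self]
  have hRCR : Rᴴ * C * R = 0 := by
    refine le_antisymm ?_ (hC.conjTranspose_mul_mul_same R).nonneg
    calc Rᴴ * C * R ≤ Rᴴ * (α • A) * R := star_left_conjugate_le_conjugate hCA R
      _ = 0 := by rw [mul_smul_comm, smul_mul_assoc, Matrix.mul_assoc, hAR, Matrix.mul_zero,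
          smul_zero]
  have hCQ : C = C * (A * P) := by
    rw [← sub_eq_zero, ← Matrix.mul_one C, Matrix.mul_assoc, Matrix.one_mul, ← mul_sub]
    exact hC.mul_eq_zero_of_conjTranspose_mul_mul_eq_zero hRCR
  simpa only [conjTranspose_mul, hC.isHermitian.eq, hP.isHermitian_mul.eq]
    using congrArg conjTranspose hCQ.symm

lemma exists_le_smul_of_mul_mul_eq (hP : IsMoorePenroseInverse A P) (hA : A.PosSemidef)
    (hC : C.IsHermitian) (hQC : A * P * C = C) : ∃ α : ℝ, 0 < α ∧ C ≤ α • A := by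
  obtain ⟨α, hα, hCB⟩ := (hP.posDef_add_one_sub hA).exists_le_smul hC
  have hQ : (A * P)ᴴ = A * P := hP.isHermitian_mul.eq
  have hCQ : C * (A * P) = C := by
    simpa only [conjTranspose_mul, hC.eq, hQ] using congrArg conjTranspose hQC
  refine ⟨α, hα, ?_⟩
  calc C = (A * P)ᴴ * C * (A * P) := by rw [hQ, hQC, hCQ]
    _ ≤ (A * P)ᴴ * (α • (A + (1 - A * P))) * (A * P) :=
        star_left_conjugate_le_conjugate hCB _
    _ = α • A := by
        rw [hQ, mul_smul_comm, smul_mul_assoc, hP.mul_mul_add_one_sub,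
          hP.self_mul_mul_eq hA.isHermitian]

end IsMoorePenroseInverse

/-- Proposition A.4: for symmetric positive semidefinite `A` and `C`, there exists
`α > 0` with `C ⪯ α·A` if and only if `A·A⁺·C = C`. -/
theorem loewner_domination_iff_pseudoinverse
    (n : ℕ) (A C P : Matrix (Fin n) (Fin n) ℝ)
    (hA : A.PosSemidef) (hC : C.PosSemidef)
    (hP : IsMoorePenroseInverse A P) :
    (∃ α : ℝ, 0 < α ∧ (α • A - C).PosSemidef) ↔ A * P * C = C := by
  simp only [← le_iff]
  constructor
  · rintro ⟨α, -, hCA⟩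
    exact hP.mul_mul_eq_of_le_smul hA.isHermitian hC hCA
  · exact hP.exists_le_smul_of_mul_mul_eq hA hC.isHermitian
end

section
/- Let 0 ≤ μ < L be real numbers. Consider the three triples of (point, gradient, function value) in ℝ²×ℝ²×ℝ: ((0,0), (0,0), 0), ((1,0), ((L+μ)/2, (L−μ)/2), (L+μ)/4), and ((−1,0), (−(L+μ)/2, (L−μ)/2), (L+μ)/4). These triples satisfy the equality (1/2)·(g_i + g_j)ᵀ·(x_i − x_j) = f_i − f_j for all pairs (i,j), yet there exist no real symmetric 2×2 matrix Q and vector b ∈ ℝ² such that the function f(x) = (1/2)·xᵀ·Q·x − bᵀ·x satisfies ∇f(x_i) = Q·x_i − b = g_i and f(x_i) = f_i for all three triples. -/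
open Matrix

/-- Counterexample (Section 3.4): three triples satisfying the necessary secant-type
equality `½(gᵢ+gⱼ)ᵀ(xᵢ−xⱼ) = fᵢ−fⱼ` for all pairs, yet no nonhomogeneous quadratic
`f(x) = ½xᵀQx − bᵀx` (with `Q` symmetric) interpolates them. -/
theorem nonhomogeneous_quadratic_counterexample
    (μ L : ℝ) (hμ : 0 ≤ μ) (hμL : μ < L)
    (x g : Fin 3 → (Fin 2 → ℝ)) (f : Fin 3 → ℝ)
    (hx : x = ![![0, 0], ![1, 0], ![-1, 0]])
    (hg : g = ![![0, 0], ![(L + μ) / 2, (L - μ) / 2], ![-((L + μ) / 2), (L - μ) / 2]])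
    (hf : f = ![0, (L + μ) / 4, (L + μ) / 4]) :
    (∀ i j : Fin 3, (1 / 2) * ((g i + g j) ⬝ᵥ (x i - x j)) = f i - f j) ∧
      ¬ ∃ (Q : Matrix (Fin 2) (Fin 2) ℝ) (b : Fin 2 → ℝ),
          Qᵀ = Q ∧
          ∀ i : Fin 3,
            Q.mulVec (x i) - b = g i ∧
            (1 / 2) * (x i ⬝ᵥ Q.mulVec (x i)) - b ⬝ᵥ x i = f i := by
  subst hx hg hf
  constructor
  · intro i j
    fin_cases i <;> fin_cases j <;>
      simp [dotProduct, Fin.sum_univ_two] <;> ring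
  · rintro ⟨Q, b, -, h⟩
    have h0 := (h 0).1
    have h1 := (h 1).1
    have h2 := (h 2).1
    have e0 := congrFun h0 1
    have e1 := congrFun h1 1
    have e2 := congrFun h2 1
    simp [mulVec, dotProduct, Fin.sum_univ_two, Matrix.vecHead, Matrix.vecTail] at e0 e1 e2
    -- e0 : b 1 = 0, e1 : Q 1 0 - b 1 = (L-μ)/2, e2 : -Q 1 0 - b 1 = (L-μ)/2
    nlinarith [e0, e1, e2]
end

section
/- Let A and C be real symmetric positive semidefinite n×n matrices. Then there exists L₁ > 0 with C ⪯ L₁²·A if and only if there exists L₂ > 0 with C² ⪯ L₂²·A. -/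
/-!
Only the spectrum of `C` matters. On `spectrum ℝ C ⊆ [0, ∞)`, which is compact, `x² ≤ c x`
for `c` bounding the spectrum; since for a matrix the spectrum is finite, its nonzero points are
bounded away from `0` and also `x ≤ d x²`. The functional calculus turns these into
`C² ⪯ c C` and `C ⪯ d C²`, and a bound `⪯ L² A` transfers along either inequality.
-/

open scoped MatrixOrder

section SpectralComparison

variable {A : Type*} [TopologicalSpace A] [Ring A] [StarRing A] [PartialOrder A]
  [StarOrderedRing A] [Algebra ℝ A] [ContinuousFunctionalCalculus ℝ A IsSelfAdjoint]
  [NonnegSpectrumClass ℝ A]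

lemma exists_mul_self_le_smul {a : A} (ha : 0 ≤ a) : ∃ c : ℝ, 0 < c ∧ a * a ≤ c • a := by
  obtain ⟨M, hM⟩ := (ContinuousFunctionalCalculus.isCompact_spectrum (R := ℝ) a).bddAbove
  refine ⟨max M 1, by positivity, ?_⟩
  rw [← cfc_id' ℝ a, ← cfc_mul .., ← cfc_smul ..]
  refine cfc_mono fun x hx => ?_
  have hx0 : 0 ≤ x := spectrum_nonneg_of_nonneg ha hx
  simp only [smul_eq_mul]
  nlinarith [hM hx, le_max_left M 1]

lemma exists_le_smul_mul_self {a : A} (ha : 0 ≤ a) (hfin : (spectrum ℝ a).Finite) :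
    ∃ d : ℝ, 0 < d ∧ a ≤ d • (a * a) := by
  obtain ⟨M, hM⟩ := (hfin.image (·⁻¹)).bddAbove
  refine ⟨max M 1, by positivity, ?_⟩
  rw [← cfc_id' ℝ a, ← cfc_mul .., ← cfc_smul ..]
  refine cfc_mono fun x hx => ?_
  rcases (spectrum_nonneg_of_nonneg ha hx).eq_or_lt with rfl | hx0
  · simp
  · have hinv : x⁻¹ ≤ max M 1 := (hM ⟨x, hx, rfl⟩).trans (le_max_left M 1)
    have : 1 ≤ max M 1 * x := by rwa [inv_le_iff_one_le_mul₀ hx0] at hinv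
    simp only [smul_eq_mul]
    nlinarith

end SpectralComparison

lemma exists_le_sq_smul_of_le_smul {M : Type*} [Preorder M] [MulAction ℝ M] [PosSMulMono ℝ M]
    {a b b' : M} {c : ℝ} (hc : 0 < c) (hb : b ≤ c • b') :
    (∃ L : ℝ, 0 < L ∧ b' ≤ L ^ 2 • a) → ∃ L : ℝ, 0 < L ∧ b ≤ L ^ 2 • a := by
  rintro ⟨L, hL, hb'⟩
  refine ⟨L * √c, by positivity, hb.trans ?_⟩
  calc c • b' ≤ c • L ^ 2 • a := smul_le_smul_of_nonneg_left hb' hc.le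
    _ = (L * √c) ^ 2 • a := by rw [smul_smul, mul_pow, Real.sq_sqrt hc.le, mul_comm]

theorem loewner_domination_iff_sq_domination_general
    (n : ℕ) (A C : Matrix (Fin n) (Fin n) ℝ)
    (hC : C.PosSemidef) :
    (∃ L₁ : ℝ, 0 < L₁ ∧ (L₁ ^ 2 • A - C).PosSemidef) ↔
      (∃ L₂ : ℝ, 0 < L₂ ∧ (L₂ ^ 2 • A - C * C).PosSemidef) := by
  obtain ⟨c, hc, hsq_le⟩ := exists_mul_self_le_smul hC.nonneg
  obtain ⟨d, hd, hle_sq⟩ := exists_le_smul_mul_self hC.nonneg C.finite_real_spectrum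
  exact ⟨exists_le_sq_smul_of_le_smul hc hsq_le, exists_le_sq_smul_of_le_smul hd hle_sq⟩

/-- Equivalence from the proof of Theorem 3.6: for symmetric positive semidefinite `A`
and `C`, `C ⪯ L₁²·A` for some `L₁ > 0` if and only if `C² ⪯ L₂²·A` for some `L₂ > 0`. -/
theorem loewner_domination_iff_sq_domination
    (n : ℕ) (A C : Matrix (Fin n) (Fin n) ℝ)
    (hA : A.PosSemidef) (hC : C.PosSemidef) :
    (∃ L₁ : ℝ, 0 < L₁ ∧ (L₁ ^ 2 • A - C).PosSemidef) ↔
      (∃ L₂ : ℝ, 0 < L₂ ∧ (L₂ ^ 2 • A - C * C).PosSemidef) :=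
  loewner_domination_iff_sq_domination_general n A C hC
end

section
/- Let 0 < μ < 1, 0 < h < 1/μ, and N ≥ 1 an integer, and set τ = μ / (μ − 1 + (1 − μh)^{−2N}), which is a positive real number. Define ℓ: ℝ → ℝ by ℓ(x) = (1/2)·x² if |x| ≤ τ, and ℓ(x) = (μ/2)·x² + (1−μ)·τ·|x| − ((1−μ)/2)·τ² if |x| ≥ τ. Then ℓ is μ-strongly convex and differentiable with derivative that is Lipschitz continuous with constant 1 (i.e., ℓ belongs to the class of 1-smooth μ-strongly convex functions on ℝ). -/
/-!
With `c` the clamp onto `[-τ, τ]`, `ℓ x = x²/2 - (1 - μ)/2 · (x - c x)²`, and the squared distance to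
an interval has derivative `2 (x - c x)`; hence `ℓ' x = μ x + (1 - μ) c x`. As `c` is monotone and
`1`-Lipschitz, `ℓ' x - μ x = (1 - μ) c x` is monotone, which is the strong convexity, and `ℓ'` is a
convex combination of two `1`-Lipschitz maps, which is the smoothness. Finally `τ > 0` because
`0 < (1 - μh)^{2N} ≤ 1` makes its denominator at least `μ`.
-/

open Set Filter Asymptotics

noncomputable section

/-- The function `ℓ` of the theorem, for an arbitrary threshold `τ`. -/
def huberWorstCase (μ τ x : ℝ) : ℝ :=
  if |x| ≤ τ then (1 / 2) * x ^ 2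
  else (μ / 2) * x ^ 2 + (1 - μ) * τ * |x| - ((1 - μ) / 2) * τ ^ 2

def clamp (τ x : ℝ) : ℝ := max (-τ) (min τ x)

end

theorem monotone_clamp (τ : ℝ) : Monotone (clamp τ) :=
  fun _ _ hab => max_le_max le_rfl (min_le_min le_rfl hab)

theorem lipschitzWith_clamp (τ : ℝ) : LipschitzWith 1 (clamp τ) :=
  (LipschitzWith.id.const_min τ).const_max (-τ)

theorem hasDerivAt_of_abs_sub_le_sq {f : ℝ → ℝ} {f' x C : ℝ}
    (h : ∀ y, |f y - f x - f' * (y - x)| ≤ C * (y - x) ^ 2) : HasDerivAt f f' x := by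
  rw [hasDerivAt_iff_isLittleO]
  refine (IsBigO.of_bound C (Eventually.of_forall fun y => ?_)).trans_isLittleO
    (isLittleO_pow_sub_sub x one_lt_two)
  simpa [mul_comm] using h y

theorem hasDerivAt_max_zero_sq (x : ℝ) :
    HasDerivAt (fun y : ℝ => max y 0 ^ 2) (2 * max x 0) x := by
  refine hasDerivAt_of_abs_sub_le_sq (C := 1) fun y => ?_
  rw [abs_le]
  rcases le_total x 0 with hx | hx <;> rcases le_total y 0 with hy | hy <;>
    simp only [max_eq_left, max_eq_right, hx, hy] <;> constructor <;> nlinarith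

theorem huberWorstCase_eq_half_sq_sub_max_sq {τ : ℝ} (hτ : 0 ≤ τ) (μ x : ℝ) :
    huberWorstCase μ τ x =
      (1 / 2) * x ^ 2 - ((1 - μ) / 2) * (max (x - τ) 0 ^ 2 + max (-x - τ) 0 ^ 2) := by
  unfold huberWorstCase
  split_ifs with hx
  · rw [abs_le] at hx
    rw [max_eq_right (by linarith), max_eq_right (by linarith)]
    ring
  · rcases abs_cases x with ⟨hax, -⟩ | ⟨hax, -⟩ <;> rw [hax] at hx ⊢
    · rw [max_eq_left (by linarith), max_eq_right (by linarith)]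
      ring
    · rw [max_eq_right (by linarith), max_eq_left (by linarith)]
      ring

theorem max_sub_zero_sub_max_neg_sub_zero {τ : ℝ} (hτ : 0 ≤ τ) (x : ℝ) :
    max (x - τ) 0 - max (-x - τ) 0 = x - clamp τ x := by
  unfold clamp
  rcases le_total x (-τ) with h | h
  · rw [max_eq_right (by linarith), max_eq_left (by linarith), min_eq_right (by linarith),
      max_eq_left h]
    ring
  rcases le_total x τ with h' | h'
  · rw [max_eq_right (by linarith), max_eq_right (by linarith), min_eq_right h', max_eq_right h]
    ring
  · rw [max_eq_left (by linarith), max_eq_right (by linarith), min_eq_left h',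
      max_eq_right (by linarith), sub_zero]

theorem hasDerivAt_huberWorstCase {τ : ℝ} (hτ : 0 ≤ τ) (μ x : ℝ) :
    HasDerivAt (huberWorstCase μ τ) (μ * x + (1 - μ) * clamp τ x) x := by
  have hpos : HasDerivAt (fun y => max (y - τ) 0 ^ 2) (2 * max (x - τ) 0) x :=
    (hasDerivAt_max_zero_sq (x - τ)).comp_sub_const x τ
  have hinner : HasDerivAt (fun y : ℝ => -y - τ) (-1) x := (hasDerivAt_neg x).sub_const τ
  have hneg : HasDerivAt (fun y => max (-y - τ) 0 ^ 2) (2 * max (-x - τ) 0 * (-1)) x := by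
    exact (hasDerivAt_max_zero_sq (-x - τ)).comp x hinner
  have h := ((hasDerivAt_pow 2 x).const_mul (1 / 2 : ℝ)).sub
    ((hpos.add hneg).const_mul ((1 - μ) / 2))
  rw [funext (huberWorstCase_eq_half_sq_sub_max_sq hτ μ)]
  refine h.congr_deriv ?_
  linear_combination (μ - 1) * max_sub_zero_sub_max_neg_sub_zero hτ x

theorem deriv_huberWorstCase {τ : ℝ} (hτ : 0 ≤ τ) (μ : ℝ) :
    deriv (huberWorstCase μ τ) = fun x => μ * x + (1 - μ) * clamp τ x :=
  funext fun x => (hasDerivAt_huberWorstCase hτ μ x).deriv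

theorem differentiable_huberWorstCase {τ : ℝ} (hτ : 0 ≤ τ) (μ : ℝ) :
    Differentiable ℝ (huberWorstCase μ τ) :=
  fun x => (hasDerivAt_huberWorstCase hτ μ x).differentiableAt

theorem convexOn_huberWorstCase_sub_sq {μ τ : ℝ} (hτ : 0 ≤ τ) (hμ : μ ≤ 1) :
    ConvexOn ℝ univ (fun x => huberWorstCase μ τ x - (μ / 2) * x ^ 2) := by
  have hderiv : ∀ x, HasDerivAt (fun x => huberWorstCase μ τ x - (μ / 2) * x ^ 2)
      ((1 - μ) * clamp τ x) x := fun x =>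
    ((hasDerivAt_huberWorstCase hτ μ x).sub ((hasDerivAt_pow 2 x).const_mul (μ / 2))).congr_deriv
      (by push_cast; ring)
  refine Monotone.convexOn_univ_of_deriv (fun x => (hderiv x).differentiableAt) ?_
  rw [funext fun x => (hderiv x).deriv]
  exact (monotone_clamp τ).const_mul (sub_nonneg.mpr hμ)

theorem LipschitzWith.convex_combination {α : Type*} [PseudoMetricSpace α] {f g : α → ℝ}
    (hf : LipschitzWith 1 f) (hg : LipschitzWith 1 g) {t : ℝ} (ht₀ : 0 ≤ t) (ht₁ : t ≤ 1) :
    LipschitzWith 1 fun x => t * f x + (1 - t) * g x := by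
  refine LipschitzWith.of_dist_le_mul fun x y => ?_
  have hfxy := hf.dist_le_mul x y
  have hgxy := hg.dist_le_mul x y
  simp only [Real.dist_eq, NNReal.coe_one, one_mul] at hfxy hgxy ⊢
  calc |t * f x + (1 - t) * g x - (t * f y + (1 - t) * g y)|
      = |t * (f x - f y) + (1 - t) * (g x - g y)| := by ring_nf
    _ ≤ t * |f x - f y| + (1 - t) * |g x - g y| := by
      refine (abs_add_le _ _).trans_eq ?_
      rw [abs_mul, abs_mul, abs_of_nonneg ht₀, abs_of_nonneg (sub_nonneg.mpr ht₁)]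
    _ ≤ t * dist x y + (1 - t) * dist x y := by gcongr
    _ = dist x y := by ring

theorem lipschitzWith_deriv_huberWorstCase {μ τ : ℝ} (hτ : 0 ≤ τ) (hμ₀ : 0 ≤ μ) (hμ₁ : μ ≤ 1) :
    LipschitzWith 1 (deriv (huberWorstCase μ τ)) := by
  rw [deriv_huberWorstCase hτ]
  exact LipschitzWith.id.convex_combination (lipschitzWith_clamp τ) hμ₀ hμ₁

theorem div_sub_one_add_inv_pos {μ r : ℝ} (hμ : 0 < μ) (hr₀ : 0 < r) (hr₁ : r ≤ 1) :
    0 < μ / (μ - 1 + r⁻¹) := by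
  have : 1 ≤ r⁻¹ := one_le_inv₀ hr₀ |>.mpr hr₁
  exact div_pos hμ (by linarith)

theorem huber_worst_case_function_smooth_strongly_convex_general
    (μ h : ℝ) (N : ℕ) (hμ0 : 0 < μ) (hμ1 : μ < 1)
    (hh0 : 0 < h) (hh1 : h < 1 / μ)
    (τ : ℝ) (hτ : τ = μ / (μ - 1 + ((1 - μ * h) ^ (2 * N))⁻¹))
    (ℓ : ℝ → ℝ)
    (hℓ : ∀ x : ℝ, ℓ x =
      if |x| ≤ τ then (1 / 2) * x ^ 2
      else (μ / 2) * x ^ 2 + (1 - μ) * τ * |x| - ((1 - μ) / 2) * τ ^ 2) :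
    0 < τ ∧
      ConvexOn ℝ Set.univ (fun x => ℓ x - (μ / 2) * x ^ 2) ∧
      Differentiable ℝ ℓ ∧
      LipschitzWith 1 (deriv ℓ) := by
  have hμh : μ * h < 1 := by rwa [lt_div_iff₀ hμ0, mul_comm] at hh1
  have hbase₀ : 0 < 1 - μ * h := by linarith
  have hbase₁ : 1 - μ * h ≤ 1 := by nlinarith
  have hτ₀ : 0 < τ := hτ ▸ div_sub_one_add_inv_pos hμ0 (pow_pos hbase₀ _)
    (pow_le_one₀ hbase₀.le hbase₁)
  obtain rfl : ℓ = huberWorstCase μ τ := funext hℓ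
  exact ⟨hτ₀, convexOn_huberWorstCase_sub_sq hτ₀.le hμ1.le, differentiable_huberWorstCase hτ₀.le μ,
    lipschitzWith_deriv_huberWorstCase hτ₀.le hμ0.le hμ1.le⟩

/-- The Huber-type worst-case function `ℓ_{μ,h}` of the performance estimation
literature: with threshold `τ = μ/(μ − 1 + (1 − μh)^{−2N}) > 0`, the function `ℓ`
is `μ`-strongly convex and `1`-smooth (differentiable with `1`-Lipschitz derivative). -/
theorem huber_worst_case_function_smooth_strongly_convex
    (μ h : ℝ) (N : ℕ) (hμ0 : 0 < μ) (hμ1 : μ < 1)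
    (hh0 : 0 < h) (hh1 : h < 1 / μ) (hN : 1 ≤ N)
    (τ : ℝ) (hτ : τ = μ / (μ - 1 + ((1 - μ * h) ^ (2 * N))⁻¹))
    (ℓ : ℝ → ℝ)
    (hℓ : ∀ x : ℝ, ℓ x =
      if |x| ≤ τ then (1 / 2) * x ^ 2
      else (μ / 2) * x ^ 2 + (1 - μ) * τ * |x| - ((1 - μ) / 2) * τ ^ 2) :
    0 < τ ∧
      ConvexOn ℝ Set.univ (fun x => ℓ x - (μ / 2) * x ^ 2) ∧
      Differentiable ℝ ℓ ∧
      LipschitzWith 1 (deriv ℓ) :=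
  huber_worst_case_function_smooth_strongly_convex_general μ h N hμ0 hμ1 hh0 hh1 τ hτ ℓ hℓ
end
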